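/- arXiv:0708.1061 — 9 statements merged into one kernel-verified Lean document; each statement's English description precedes it below -/
import Mathlib

section
/- The function f(q_1, ..., q_h) = ∑_{j=1}^h ξ_j log(q_j) + ∑_{j=1}^h ζ_j log(∑_{k=j}^h q_k) is strictly concave on the open positive orthant (0,∞)^h. -/
open Finset

private lemma log_aux_le (c : ℝ) (hc : 0 ≤ c) {t s a b : ℝ} (ht : 0 < t) (hs : 0 < s)
    (ha : 0 < a) (hb : 0 < b) (hab : a + b = 1) :
    a * (c * Real.log t) + b * (c * Real.log s) ≤ c * Real.log (a * t + b * s) := by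
  have := strictConcaveOn_log_Ioi.concaveOn.2 (Set.mem_Ioi.2 ht) (Set.mem_Ioi.2 hs)
    ha.le hb.le hab
  simp only [smul_eq_mul] at this
  nlinarith [this]

private lemma log_aux_lt (c : ℝ) (hc : 1 ≤ c) {t s a b : ℝ} (ht : 0 < t) (hs : 0 < s)
    (hts : t ≠ s) (ha : 0 < a) (hb : 0 < b) (hab : a + b = 1) :
    a * (c * Real.log t) + b * (c * Real.log s) < c * Real.log (a * t + b * s) := by
  have := strictConcaveOn_log_Ioi.2 (Set.mem_Ioi.2 ht) (Set.mem_Ioi.2 hs) hts ha hb hab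
  simp only [smul_eq_mul] at this
  nlinarith [this]

/-- The function
`f(q_1, ..., q_h) = ∑_{j=1}^h ξ_j log(q_j) + ∑_{j=1}^h ζ_j log(∑_{k=j}^h q_k)`
is strictly concave on the open positive orthant `(0,∞)^h`, where `h ≥ 1`
and `ξ_j + ζ_j ≥ 1` for all `j`. -/
theorem stmt0 (h : ℕ) (hh : 1 ≤ h) (ξ ζ : Fin h → ℕ)
    (hξζ : ∀ j, 1 ≤ ξ j + ζ j) :
    StrictConcaveOn ℝ {q : Fin h → ℝ | ∀ j, 0 < q j}
      (fun q => (∑ j, (ξ j : ℝ) * Real.log (q j))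
        + ∑ j, (ζ j : ℝ) * Real.log (∑ k ∈ Finset.univ.filter (fun k => j ≤ k), q k)) := by
  set S : Fin h → (Fin h → ℝ) → ℝ := fun j q => ∑ k ∈ Finset.univ.filter (fun k => j ≤ k), q k
    with hS
  have hSpos : ∀ (q : Fin h → ℝ), (∀ j, 0 < q j) → ∀ j, 0 < S j q := by
    intro q hq j
    apply Finset.sum_pos (fun k _ => hq k)
    exact ⟨j, by simp⟩
  constructor
  · intro x hx y hy a b ha hb hab
    intro j
    rcases eq_or_lt_of_le ha with rfl | ha'
    · simpa [show b = 1 by linarith] using hy j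
    · have : 0 < a * x j := mul_pos ha' (hx j)
      have : 0 ≤ b * y j := mul_nonneg hb (hy j).le
      simp only [Pi.add_apply, Pi.smul_apply, smul_eq_mul]
      linarith
  · intro x hx y hy hxy a b ha hb hab
    simp only [Set.mem_setOf_eq] at hx hy
    -- choose maximal index where x ≠ y
    have hne : (Finset.univ.filter (fun j => x j ≠ y j)).Nonempty := by
      by_contra hc
      apply hxy
      funext j
      by_contra hj
      exact hc ⟨j, by simp [hj]⟩
    set j₀ := (Finset.univ.filter (fun j => x j ≠ y j)).max' hne with hj₀
    have hj₀ne : x j₀ ≠ y j₀ := by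
      have := (Finset.univ.filter (fun j => x j ≠ y j)).max'_mem hne
      simpa using this
    have hgt : ∀ k, j₀ < k → x k = y k := by
      intro k hk
      by_contra hxk
      exact absurd (Finset.le_max' _ k (by simp [hxk])) (not_le.2 hk)
    have hSne : S j₀ x ≠ S j₀ y := by
      intro hEq
      apply hj₀ne
      have : ∑ k ∈ Finset.univ.filter (fun k => j₀ ≤ k), (x k - y k) = 0 := by
        rw [Finset.sum_sub_distrib]
        simpa [hS] using sub_eq_zero_of_eq hEq
      have h2 : ∀ k ∈ Finset.univ.filter (fun k => j₀ ≤ k), k ≠ j₀ → x k - y k = 0 := by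
        intro k hk hkne
        have : j₀ ≤ k := by simpa using hk
        have : j₀ < k := lt_of_le_of_ne this (Ne.symm hkne)
        simp [hgt k this]
      have h3 := Finset.sum_eq_single j₀ h2 (by intro hj; exact absurd (by simp) hj)
      rw [h3] at this
      linarith [this]
    -- linearity of S
    have hSlin : ∀ j, S j (a • x + b • y) = a * S j x + b * S j y := by
      intro j
      simp only [hS, Pi.add_apply, Pi.smul_apply, smul_eq_mul]
      rw [Finset.sum_add_distrib, Finset.mul_sum, Finset.mul_sum]
    -- rewrite as a single sum and compare termwise
    have key : ∑ j, (a * ((ξ j : ℝ) * Real.log (x j) + (ζ j : ℝ) * Real.log (S j x))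
          + b * ((ξ j : ℝ) * Real.log (y j) + (ζ j : ℝ) * Real.log (S j y)))
        < ∑ j, ((ξ j : ℝ) * Real.log ((a • x + b • y) j)
          + (ζ j : ℝ) * Real.log (S j (a • x + b • y))) := by
      apply Finset.sum_lt_sum
      · intro j _
        have hterm1 : a * ((ξ j : ℝ) * Real.log (x j)) + b * ((ξ j : ℝ) * Real.log (y j))
            ≤ (ξ j : ℝ) * Real.log ((a • x + b • y) j) := by
          simpa using log_aux_le (ξ j) (by positivity) (hx j) (hy j) ha hb hab
        have hterm2 : a * ((ζ j : ℝ) * Real.log (S j x)) + b * ((ζ j : ℝ) * Real.log (S j y))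
            ≤ (ζ j : ℝ) * Real.log (S j (a • x + b • y)) := by
          rw [hSlin j]
          exact log_aux_le (ζ j) (by positivity) (hSpos x hx j) (hSpos y hy j) ha hb hab
        linarith
      · refine ⟨j₀, Finset.mem_univ _, ?_⟩
        by_cases hξ1 : 1 ≤ ξ j₀
        · have hterm1 : a * ((ξ j₀ : ℝ) * Real.log (x j₀)) + b * ((ξ j₀ : ℝ) * Real.log (y j₀))
              < (ξ j₀ : ℝ) * Real.log ((a • x + b • y) j₀) := by
            simpa using log_aux_lt (ξ j₀) (by exact_mod_cast hξ1) (hx j₀) (hy j₀) hj₀ne ha hb hab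
          have hterm2 : a * ((ζ j₀ : ℝ) * Real.log (S j₀ x)) + b * ((ζ j₀ : ℝ) * Real.log (S j₀ y))
              ≤ (ζ j₀ : ℝ) * Real.log (S j₀ (a • x + b • y)) := by
            rw [hSlin j₀]
            exact log_aux_le (ζ j₀) (by positivity) (hSpos x hx j₀) (hSpos y hy j₀) ha hb hab
          linarith
        · have hζ1 : 1 ≤ ζ j₀ := by have := hξζ j₀; omega
          have hterm1 : a * ((ξ j₀ : ℝ) * Real.log (x j₀)) + b * ((ξ j₀ : ℝ) * Real.log (y j₀))
              ≤ (ξ j₀ : ℝ) * Real.log ((a • x + b • y) j₀) := by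
            simpa using log_aux_le (ξ j₀) (by positivity) (hx j₀) (hy j₀) ha hb hab
          have hterm2 : a * ((ζ j₀ : ℝ) * Real.log (S j₀ x)) + b * ((ζ j₀ : ℝ) * Real.log (S j₀ y))
              < (ζ j₀ : ℝ) * Real.log (S j₀ (a • x + b • y)) := by
            rw [hSlin j₀]
            exact log_aux_lt (ζ j₀) (by exact_mod_cast hζ1) (hSpos x hx j₀) (hSpos y hy j₀)
              hSne ha hb hab
          linarith
    calc a • ((∑ j, (ξ j : ℝ) * Real.log (x j)) + ∑ j, (ζ j : ℝ) * Real.log (S j x))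
          + b • ((∑ j, (ξ j : ℝ) * Real.log (y j)) + ∑ j, (ζ j : ℝ) * Real.log (S j y))
        = ∑ j, (a * ((ξ j : ℝ) * Real.log (x j) + (ζ j : ℝ) * Real.log (S j x))
            + b * ((ξ j : ℝ) * Real.log (y j) + (ζ j : ℝ) * Real.log (S j y))) := by
          simp only [smul_eq_mul, Finset.mul_sum, mul_add]
          rw [Finset.sum_add_distrib, Finset.sum_add_distrib, Finset.sum_add_distrib]
      _ < ∑ j, ((ξ j : ℝ) * Real.log ((a • x + b • y) j)
            + (ζ j : ℝ) * Real.log (S j (a • x + b • y))) := key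
      _ = (∑ j, (ξ j : ℝ) * Real.log ((a • x + b • y) j))
            + ∑ j, (ζ j : ℝ) * Real.log (S j (a • x + b • y)) := Finset.sum_add_distrib
end

section
/- The likelihood L attains its maximum over the simplex Δ at exactly one point; that is, there exists a unique p* ∈ Δ with L(p*) ≥ L(p) for all p ∈ Δ. -/
/-!
A maximizer exists because the simplex is compact and `L` is continuous. For uniqueness, write
`L` as a product of powers of nonnegative linear forms: the coordinates `p_j` (exponent `ξ_j`) and
the tail sums `∑_{k ≥ j} p_k / w_k` (exponent `ζ_j`). By AM-GM, each form satisfies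
`ℓ(a) ℓ(b) ≤ ℓ((a + b) / 2) ^ 2`, strictly when `ℓ(a) ≠ ℓ(b)`. If `a` and `b` both maximize `L`, the
midpoint cannot do better, so every form with a nonzero exponent agrees at `a` and `b`. Since
`ξ_j + ζ_j ≥ 1`, a downward induction on `j` then gives `a_j = b_j`.
-/

open Finset

section ProdPow

variable {ι : Type*} [Fintype ι] (e : ι → ℕ)

lemma pow_mul_pow_le_sq_pow_midpoint {x y : ℝ} (hx : 0 ≤ x) (hy : 0 ≤ y) (n : ℕ) :
    x ^ n * y ^ n ≤ (((x + y) / 2) ^ n) ^ 2 := by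
  rw [← mul_pow, ← pow_mul, mul_comm n, pow_mul]
  gcongr
  nlinarith [sq_nonneg (x - y)]

lemma pow_mul_pow_lt_sq_pow_midpoint {x y : ℝ} (hx : 0 ≤ x) (hy : 0 ≤ y) (hxy : x ≠ y)
    {n : ℕ} (hn : n ≠ 0) : x ^ n * y ^ n < (((x + y) / 2) ^ n) ^ 2 := by
  rw [← mul_pow, ← pow_mul, mul_comm n, pow_mul]
  gcongr
  nlinarith [sq_pos_of_ne_zero (sub_ne_zero.2 hxy)]

lemma eq_of_sq_prod_pow_midpoint_le {x y : ι → ℝ} (hx : ∀ i, 0 ≤ x i) (hy : ∀ i, 0 ≤ y i)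
    (hpos : 0 < (∏ i, x i ^ e i) * ∏ i, y i ^ e i)
    (hle : (∏ i, ((x i + y i) / 2) ^ e i) ^ 2 ≤ (∏ i, x i ^ e i) * ∏ i, y i ^ e i)
    {i : ι} (hi : e i ≠ 0) : x i = y i := by
  rw [← prod_mul_distrib] at hpos hle
  rw [← prod_pow] at hle
  by_contra hne
  have hfactor_pos : ∀ j ∈ univ, 0 < x j ^ e j * y j ^ e j := fun j _ =>
    (mul_nonneg (pow_nonneg (hx j) _) (pow_nonneg (hy j) _)).lt_of_ne'
      ((prod_ne_zero_iff.1 hpos.ne') j (mem_univ j))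
  have := prod_lt_prod hfactor_pos
    (fun j _ => pow_mul_pow_le_sq_pow_midpoint (hx j) (hy j) (e j))
    ⟨i, mem_univ i, pow_mul_pow_lt_sq_pow_midpoint (hx i) (hy i) hne hi⟩
  exact this.not_ge hle

theorem eq_of_isMaxOn_prod_pow {E : Type*} [AddCommGroup E] [Module ℝ E] {C : Set E}
    (hC : Convex ℝ C) {F : E → ι → ℝ} (hF_nonneg : ∀ p ∈ C, ∀ i, 0 ≤ F p i)
    (hF_midpoint : ∀ a b i, F (midpoint ℝ a b) i = (F a i + F b i) / 2)
    {a b : E} (ha : a ∈ C) (hb : b ∈ C)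
    (hmax_a : IsMaxOn (fun p => ∏ i, F p i ^ e i) C a)
    (hmax_b : IsMaxOn (fun p => ∏ i, F p i ^ e i) C b)
    (hpos : 0 < ∏ i, F a i ^ e i) {i : ι} (hi : e i ≠ 0) : F a i = F b i := by
  set G := fun p => ∏ i, F p i ^ e i
  have hab : G a = G b := le_antisymm (hmax_b ha) (hmax_a hb)
  have hmid_le : G (midpoint ℝ a b) ≤ G a := hmax_a (hC.midpoint_mem ha hb)
  have hmid_nonneg : 0 ≤ G (midpoint ℝ a b) :=
    prod_nonneg fun j _ => pow_nonneg (hF_nonneg _ (hC.midpoint_mem ha hb) j) _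
  refine eq_of_sq_prod_pow_midpoint_le e (hF_nonneg a ha) (hF_nonneg b hb)
    (mul_pos hpos (hab ▸ hpos : 0 < G b)) ?_ hi
  simp only [← hF_midpoint]
  calc G (midpoint ℝ a b) ^ 2 ≤ G a ^ 2 := pow_le_pow_left₀ hmid_nonneg hmid_le 2
    _ = G a * G b := by rw [sq, hab]

end ProdPow

section Likelihood

variable {ι : Type*} [Fintype ι] [LinearOrder ι] (w : ι → ℝ)

noncomputable def tailSum (p : ι → ℝ) (j : ι) : ℝ :=
  ∑ k ∈ univ.filter (fun k => j ≤ k), p k / w k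

lemma tailSum_sub (a b : ι → ℝ) (j : ι) :
    tailSum w a j - tailSum w b j = tailSum w (a - b) j := by
  simp only [tailSum, ← sum_sub_distrib, Pi.sub_apply, sub_div]

lemma eq_of_forall_eq_or_tailSum_eq (hw : ∀ j, w j ≠ 0) {a b : ι → ℝ}
    (h : ∀ j, a j = b j ∨ tailSum w a j = tailSum w b j) : a = b := by
  funext j
  induction j using WellFoundedGT.induction with
  | _ j ih =>
    rcases h j with hj | hj
    · exact hj
    have htail : tailSum w (a - b) j = (a j - b j) / w j :=
      sum_eq_single_of_mem j (by simp) fun k hk hkj => by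
        simp [ih k (lt_of_le_of_ne (mem_filter.1 hk).2 (Ne.symm hkj))]
    rw [← tailSum_sub, hj, sub_self, eq_comm, div_eq_zero_iff, sub_eq_zero] at htail
    exact htail.resolve_right (hw j)

noncomputable def likelihoodFactor (p : ι → ℝ) : ι ⊕ ι → ℝ :=
  Sum.elim p (tailSum w p)

lemma prod_likelihoodFactor_pow (ξ ζ : ι → ℕ) (p : ι → ℝ) :
    ∏ i, likelihoodFactor w p i ^ Sum.elim ξ ζ i = ∏ j, p j ^ ξ j * tailSum w p j ^ ζ j := by
  rw [Fintype.prod_sum_type, prod_mul_distrib]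
  rfl

lemma likelihoodFactor_midpoint (a b : ι → ℝ) (i : ι ⊕ ι) :
    likelihoodFactor w (midpoint ℝ a b) i =
      (likelihoodFactor w a i + likelihoodFactor w b i) / 2 := by
  have hmid : ∀ k, midpoint ℝ a b k = (a k + b k) / 2 := fun k => by
    rw [pi_midpoint_apply, midpoint_eq_smul_add, invOf_eq_inv, smul_eq_mul, inv_mul_eq_div]
  rcases i with j | j
  · exact hmid j
  · simp only [likelihoodFactor, Sum.elim_inr, tailSum, hmid, ← add_div, ← sum_add_distrib,
      sum_div]
    exact sum_congr rfl fun k _ => by ring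

lemma likelihoodFactor_nonneg (hw : ∀ j, 0 ≤ w j) {p : ι → ℝ} (hp : ∀ j, 0 ≤ p j)
    (i : ι ⊕ ι) : 0 ≤ likelihoodFactor w p i := by
  rcases i with j | j
  · exact hp j
  · exact sum_nonneg fun k _ => div_nonneg (hp k) (hw k)

lemma likelihoodFactor_pos (hw : ∀ j, 0 < w j) {p : ι → ℝ} (hp : ∀ j, 0 < p j)
    (i : ι ⊕ ι) : 0 < likelihoodFactor w p i := by
  rcases i with j | j
  · exact hp j
  · exact sum_pos (fun k _ => div_pos (hp k) (hw k)) ⟨j, by simp⟩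

end Likelihood

theorem stmt1_general (h : ℕ) (hh : 1 ≤ h) (w : Fin h → ℝ) (hw : ∀ j, 0 < w j)
    (ξ ζ : Fin h → ℕ) (hξζ : ∀ j, 1 ≤ ξ j + ζ j)
    (L : (Fin h → ℝ) → ℝ)
    (hL : ∀ p, L p = ∏ j, p j ^ ξ j *
      (∑ k ∈ Finset.univ.filter (fun k => j ≤ k), p k / w k) ^ ζ j) :
    ∃! p : Fin h → ℝ,
      ((∀ j, 0 ≤ p j) ∧ ∑ j, p j = 1) ∧
        ∀ q : Fin h → ℝ, ((∀ j, 0 ≤ q j) ∧ ∑ j, q j = 1) → L q ≤ L p := by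
  have : Nonempty (Fin h) := ⟨⟨0, hh⟩⟩
  have hL_cont : Continuous L := by rw [funext hL]; fun_prop
  have hL_eq : L = fun p => ∏ i, likelihoodFactor w p i ^ Sum.elim ξ ζ i :=
    funext fun p => (hL p).trans (prod_likelihoodFactor_pow w ξ ζ p).symm
  obtain ⟨p, hp, hp_max⟩ := (isCompact_stdSimplex ℝ (Fin h)).exists_isMaxOn
    ⟨_, stdSimplex.barycenter.2⟩ hL_cont.continuousOn
  have hp_pos : 0 < L p := by
    have hbary : ∀ j, 0 < (stdSimplex.barycenter : stdSimplex ℝ (Fin h)).val j := fun _ =>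
      inv_pos.2 (Nat.cast_pos.2 Fintype.card_pos)
    refine lt_of_lt_of_le ?_ (hp_max stdSimplex.barycenter.2)
    rw [hL_eq]
    exact prod_pos fun i _ => pow_pos (likelihoodFactor_pos w hw hbary i) _
  refine ⟨p, ⟨hp, fun q hq => hp_max hq⟩, fun q ⟨hq, hq_max⟩ => ?_⟩
  subst hL_eq
  have hfactor_eq : ∀ i, Sum.elim ξ ζ i ≠ 0 →
      likelihoodFactor w p i = likelihoodFactor w q i := fun i =>
    eq_of_isMaxOn_prod_pow (Sum.elim ξ ζ) (convex_stdSimplex ℝ _)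
      (fun r hr => likelihoodFactor_nonneg w (fun j => (hw j).le) hr.1)
      (likelihoodFactor_midpoint w) hp hq hp_max (isMaxOn_iff.2 hq_max) hp_pos
  refine (eq_of_forall_eq_or_tailSum_eq w (fun j => (hw j).ne') fun j => ?_).symm
  by_cases hξ : ξ j = 0
  · exact .inr (hfactor_eq (.inr j) (show ζ j ≠ 0 by have := hξζ j; omega))
  · exact .inl (hfactor_eq (.inl j) hξ)

/-- The likelihood
`L(p) = ∏_j p_j^{ξ_j} (∑_{k=j}^h p_k / w_k)^{ζ_j}`
attains its maximum over the simplex `Δ` at exactly one point. -/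
theorem stmt1 (h : ℕ) (hh : 1 ≤ h) (w : Fin h → ℝ) (hw : ∀ j, 0 < w j)
    (ξ ζ : Fin h → ℕ) (hξζ : ∀ j, 1 ≤ ξ j + ζ j)
    (m n : ℕ) (hm : m = ∑ j, ξ j) (hn : n = ∑ j, ζ j)
    (L : (Fin h → ℝ) → ℝ)
    (hL : ∀ p, L p = ∏ j, p j ^ ξ j *
      (∑ k ∈ Finset.univ.filter (fun k => j ≤ k), p k / w k) ^ ζ j) :
    ∃! p : Fin h → ℝ,
      ((∀ j, 0 ≤ p j) ∧ ∑ j, p j = 1) ∧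
        ∀ q : Fin h → ℝ, ((∀ j, 0 ≤ q j) ∧ ∑ j, q j = 1) → L q ≤ L p :=
  stmt1_general h hh w hw ξ ζ hξζ L hL
end

section
/- The EM map T sends the open simplex Δ° into itself: for every p ∈ Δ°, T(p)_j > 0 for all j and ∑_{j=1}^h T(p)_j = 1. -/
open Finset

/-- The EM map `T` sends the open simplex `Δ°` into itself:
for every `p ∈ Δ°`, `T(p)_j > 0` for all `j` and `∑_j T(p)_j = 1`. -/
theorem stmt2 (h : ℕ) (hh : 1 ≤ h) (w : Fin h → ℝ) (hw : ∀ j, 0 < w j)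
    (ξ ζ : Fin h → ℕ) (hξζ : ∀ j, 1 ≤ ξ j + ζ j)
    (m n : ℕ) (hm : m = ∑ j, ξ j) (hn : n = ∑ j, ζ j)
    (T : (Fin h → ℝ) → (Fin h → ℝ))
    (hT : ∀ p : Fin h → ℝ, ((∀ j, 0 < p j) ∧ ∑ j, p j = 1) → ∀ j,
      T p j = (↑(m + n) : ℝ)⁻¹ *
        ((ξ j : ℝ) + (w j)⁻¹ * p j *
          ∑ k ∈ Finset.univ.filter (fun k => k ≤ j),
            (ζ k : ℝ) / (∑ l ∈ Finset.univ.filter (fun l => k ≤ l), (w l)⁻¹ * p l)))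
    (p : Fin h → ℝ) (hp : (∀ j, 0 < p j) ∧ ∑ j, p j = 1) :
    (∀ j, 0 < T p j) ∧ ∑ j, T p j = 1 := by
  obtain ⟨hp1, hp2⟩ := hp
  set S : Fin h → ℝ := fun k => ∑ l ∈ Finset.univ.filter (fun l => k ≤ l), (w l)⁻¹ * p l
    with hS
  have hSpos : ∀ k, 0 < S k := by
    intro k
    apply Finset.sum_pos
    · intro l _; exact mul_pos (inv_pos.2 (hw l)) (hp1 l)
    · exact ⟨k, Finset.mem_filter.2 ⟨Finset.mem_univ k, le_refl k⟩⟩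
  have hmn : (0:ℝ) < ((m+n : ℕ) : ℝ) := by
    have h1 : 1 ≤ m + n := by
      have h0 : (⟨0, hh⟩ : Fin h) ∈ (Finset.univ : Finset (Fin h)) := Finset.mem_univ _
      calc 1 ≤ ξ ⟨0,hh⟩ + ζ ⟨0,hh⟩ := hξζ _
        _ ≤ m + n := by
          rw [hm, hn]
          exact Nat.add_le_add (Finset.single_le_sum (fun i _ => Nat.zero_le _) h0)
            (Finset.single_le_sum (fun i _ => Nat.zero_le _) h0)
    exact_mod_cast h1
  have htermnn : ∀ k : Fin h, 0 ≤ (ζ k : ℝ) / S k := fun k =>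
    div_nonneg (Nat.cast_nonneg _) (hSpos k).le
  constructor
  · intro j
    rw [hT p ⟨hp1, hp2⟩ j]
    apply mul_pos (inv_pos.2 hmn)
    have hsumnn : 0 ≤ ∑ k ∈ Finset.univ.filter (fun k => k ≤ j), (ζ k : ℝ) / S k :=
      Finset.sum_nonneg fun k _ => htermnn k
    have hwp : 0 < (w j)⁻¹ * p j := mul_pos (inv_pos.2 (hw j)) (hp1 j)
    rcases Nat.eq_zero_or_pos (ξ j) with h1 | h1
    · have hζ : 1 ≤ ζ j := by have := hξζ j; omega
      have : (ζ j : ℝ) / S j ≤ ∑ k ∈ Finset.univ.filter (fun k => k ≤ j), (ζ k : ℝ) / S k :=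
        Finset.single_le_sum (fun k _ => htermnn k)
          (Finset.mem_filter.2 ⟨Finset.mem_univ j, le_refl j⟩)
      have hpos : 0 < ∑ k ∈ Finset.univ.filter (fun k => k ≤ j), (ζ k : ℝ) / S k :=
        lt_of_lt_of_le (div_pos (by exact_mod_cast hζ) (hSpos j)) this
      have := mul_pos hwp hpos
      positivity
    · have : (0:ℝ) < (ξ j : ℝ) := by exact_mod_cast h1
      have := mul_nonneg hwp.le hsumnn
      positivity
  · have key : ∑ j, (w j)⁻¹ * p j *
        ∑ k ∈ Finset.univ.filter (fun k => k ≤ j), (ζ k : ℝ) / S k = (n:ℝ) := by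
      have step1 : ∀ j : Fin h, (w j)⁻¹ * p j *
          ∑ k ∈ Finset.univ.filter (fun k => k ≤ j), (ζ k : ℝ) / S k
          = ∑ k ∈ Finset.univ.filter (fun k => k ≤ j),
              ((ζ k : ℝ) / S k) * ((w j)⁻¹ * p j) := by
        intro j
        rw [Finset.mul_sum]
        exact Finset.sum_congr rfl fun k _ => mul_comm _ _
      calc ∑ j, (w j)⁻¹ * p j *
            ∑ k ∈ Finset.univ.filter (fun k => k ≤ j), (ζ k : ℝ) / S k
          = ∑ j, ∑ k ∈ Finset.univ.filter (fun k => k ≤ j),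
              ((ζ k : ℝ) / S k) * ((w j)⁻¹ * p j) :=
            Finset.sum_congr rfl fun j _ => step1 j
        _ = ∑ k, ∑ j ∈ Finset.univ.filter (fun j => k ≤ j),
              ((ζ k : ℝ) / S k) * ((w j)⁻¹ * p j) := by
            apply Finset.sum_comm'
            intro j k
            simp [and_comm]
        _ = ∑ k, ((ζ k : ℝ) / S k) * S k := by
            refine Finset.sum_congr rfl fun k _ => ?_
            rw [hS, ← Finset.mul_sum]
        _ = ∑ k, (ζ k : ℝ) := Finset.sum_congr rfl fun k _ =>
            div_mul_cancel₀ _ (hSpos k).ne'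
        _ = (n:ℝ) := by rw [hn]; push_cast; ring
    calc ∑ j, T p j
        = ∑ j, (↑(m + n) : ℝ)⁻¹ * ((ξ j : ℝ) + (w j)⁻¹ * p j *
            ∑ k ∈ Finset.univ.filter (fun k => k ≤ j), (ζ k : ℝ) / S k) :=
          Finset.sum_congr rfl fun j _ => hT p ⟨hp1, hp2⟩ j
      _ = (↑(m + n) : ℝ)⁻¹ * ((∑ j, (ξ j : ℝ)) + ∑ j, (w j)⁻¹ * p j *
            ∑ k ∈ Finset.univ.filter (fun k => k ≤ j), (ζ k : ℝ) / S k) := by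
          rw [← Finset.mul_sum, Finset.sum_add_distrib]
      _ = 1 := by
          rw [key]
          have hmr : (∑ j, (ξ j : ℝ)) = (m:ℝ) := by rw [hm]; push_cast; rfl
          rw [hmr, ← Nat.cast_add, inv_mul_cancel₀ hmn.ne']
end

section
/- Each EM iteration does not decrease the likelihood: for every p in the open simplex Δ°, L(T(p)) ≥ L(p). -/
open Finset Real

/-!
EM as a minorize-maximize step. For positive `p`, `q`, the log-sum inequality applied to each
censored factor `(∑_{l ≥ k} p_l / w_l)^{ζ_k}` gives
`log L(p) - log L(q) ≤ ∑_j e_j log (p_j / q_j)`, where `e_j` is the expected complete-data count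
of category `j` under `p`. The EM map is `T(p) = e / (m + n)`, so for `q = T(p)` the right-hand
side equals `-(m + n) · ∑_j q_j log (q_j / p_j)`, which is nonpositive by Gibbs' inequality
(the log-sum inequality once more, as `∑ q = ∑ p = 1`).
-/

theorem log_div_eq_neg_log_div_rev (x y : ℝ) : log (x / y) = -log (y / x) := by
  rw [← log_inv, inv_div]

theorem sum_mul_log_sum_div_sum_le {ι : Type*} {s : Finset ι} {a b : ι → ℝ}
    (hs : s.Nonempty) (ha : ∀ i ∈ s, 0 < a i) (hb : ∀ i ∈ s, 0 < b i) :
    (∑ i ∈ s, a i) * log ((∑ i ∈ s, a i) / ∑ i ∈ s, b i) ≤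
      ∑ i ∈ s, a i * log (a i / b i) := by
  set A := ∑ i ∈ s, a i
  have hA : 0 < A := sum_pos ha hs
  have jensen := strictConcaveOn_log_Ioi.concaveOn.le_map_sum (t := s)
    (w := fun i => a i / A) (p := fun i => b i / a i)
    (fun i hi => (div_pos (ha i hi) hA).le) (by rw [← sum_div, div_self hA.ne'])
    (fun i hi => div_pos (hb i hi) (ha i hi))
  have hmean : ∑ i ∈ s, (a i / A) • (b i / a i) = (∑ i ∈ s, b i) / A := by
    rw [sum_div]
    exact sum_congr rfl fun i hi => by rw [smul_eq_mul]; field_simp [(ha i hi).ne']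
  rw [hmean] at jensen
  simp only [log_div_eq_neg_log_div_rev A, log_div_eq_neg_log_div_rev (a _), mul_neg,
    sum_neg_distrib, neg_le_neg_iff]
  calc ∑ i ∈ s, a i * log (b i / a i) = A * ∑ i ∈ s, (a i / A) • log (b i / a i) := by
        rw [mul_sum]
        exact sum_congr rfl fun i _ => by rw [smul_eq_mul]; field_simp
    _ ≤ A * log ((∑ i ∈ s, b i) / A) := mul_le_mul_of_nonneg_left jensen hA.le

theorem sum_mul_log_div_nonneg {ι : Type*} {s : Finset ι} {a b : ι → ℝ}
    (ha : ∀ i ∈ s, 0 < a i) (hb : ∀ i ∈ s, 0 < b i)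
    (hab : ∑ i ∈ s, a i = ∑ i ∈ s, b i) :
    0 ≤ ∑ i ∈ s, a i * log (a i / b i) := by
  obtain rfl | hs := s.eq_empty_or_nonempty
  · simp
  · have hA : 0 < ∑ i ∈ s, a i := sum_pos ha hs
    have := sum_mul_log_sum_div_sum_le hs ha hb
    rwa [← hab, div_self hA.ne', log_one, mul_zero] at this

noncomputable section EM

variable {ι : Type*} [Fintype ι] [Preorder ι] [DecidableLE ι] (ξ ζ : ι → ℕ)
  {w p q : ι → ℝ}

def tailMass (w p : ι → ℝ) (k : ι) : ℝ := ∑ l ∈ univ.filter (k ≤ ·), (w l)⁻¹ * p l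

def likelihood (w p : ι → ℝ) : ℝ := ∏ j, p j ^ ξ j * tailMass w p j ^ ζ j

/-- The expected complete-data count of category `j` under `p`: the `ξ j` exact observations
plus, for each `k ≤ j`, the share `(w j)⁻¹ * p j / tailMass w p k` of the `ζ k` observations
censored at `k`. -/
def emWeight (w p : ι → ℝ) (j : ι) : ℝ :=
  ξ j + (w j)⁻¹ * p j * ∑ k ∈ univ.filter (· ≤ j), (ζ k : ℝ) / tailMass w p k

def emMap (w p : ι → ℝ) (j : ι) : ℝ :=
  ((∑ i, ξ i + ∑ i, ζ i : ℕ) : ℝ)⁻¹ * emWeight ξ ζ w p j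

theorem sum_mul_sum_filter_le_comm (f g : ι → ℝ) :
    ∑ j, f j * ∑ k ∈ univ.filter (· ≤ j), g k =
      ∑ k, g k * ∑ j ∈ univ.filter (k ≤ ·), f j := by
  simp only [mul_sum]
  rw [sum_comm' (t' := univ) (s' := fun k => univ.filter (k ≤ ·)) (by simp)]
  exact sum_congr rfl fun _ _ => sum_congr rfl fun _ _ => mul_comm _ _

variable {ξ ζ}

theorem tailMass_pos (hw : ∀ j, 0 < w j) (hp : ∀ j, 0 < p j) (k : ι) : 0 < tailMass w p k :=
  sum_pos (fun l _ => mul_pos (inv_pos.2 (hw l)) (hp l)) ⟨k, by simp⟩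

theorem likelihood_pos (hw : ∀ j, 0 < w j) (hp : ∀ j, 0 < p j) : 0 < likelihood ξ ζ w p :=
  prod_pos fun j _ => mul_pos (pow_pos (hp j) _) (pow_pos (tailMass_pos hw hp j) _)

theorem log_likelihood (hw : ∀ j, 0 < w j) (hp : ∀ j, 0 < p j) :
    log (likelihood ξ ζ w p) = ∑ j, (ξ j * log (p j) + ζ j * log (tailMass w p j)) := by
  have hS := tailMass_pos hw hp
  rw [likelihood, log_prod fun j _ => (mul_pos (pow_pos (hp j) _) (pow_pos (hS j) _)).ne']
  exact sum_congr rfl fun j _ => by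
    rw [log_mul (pow_ne_zero _ (hp j).ne') (pow_ne_zero _ (hS j).ne'), log_pow, log_pow]

theorem emWeight_pos (hw : ∀ j, 0 < w j) (hp : ∀ j, 0 < p j) {j : ι} (hj : 1 ≤ ξ j + ζ j) :
    0 < emWeight ξ ζ w p j := by
  have hS := tailMass_pos hw hp
  have hterm : ∀ k, 0 ≤ (ζ k : ℝ) / tailMass w p k :=
    fun k => div_nonneg (Nat.cast_nonneg _) (hS k).le
  have hself : (ζ j : ℝ) / tailMass w p j ≤
      ∑ k ∈ univ.filter (· ≤ j), (ζ k : ℝ) / tailMass w p k :=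
    single_le_sum (fun k _ => hterm k) (by simp)
  have hwp := mul_pos (inv_pos.2 (hw j)) (hp j)
  rcases Nat.eq_zero_or_pos (ξ j) with hξ | hξ
  · rw [emWeight, hξ, Nat.cast_zero, zero_add]
    exact mul_pos hwp ((div_pos (Nat.cast_pos.2 (by omega)) (hS j)).trans_le hself)
  · exact add_pos_of_pos_of_nonneg (Nat.cast_pos.2 hξ)
      (mul_nonneg hwp.le ((hterm j).trans hself))

theorem sum_emWeight (hw : ∀ j, 0 < w j) (hp : ∀ j, 0 < p j) :
    ∑ j, emWeight ξ ζ w p j = ((∑ j, ξ j + ∑ j, ζ j : ℕ) : ℝ) := by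
  have hS := tailMass_pos hw hp
  push_cast
  simp only [emWeight, sum_add_distrib, sum_mul_sum_filter_le_comm]
  congr 1
  exact sum_congr rfl fun k _ => div_mul_cancel₀ _ (hS k).ne'

theorem tailMass_mul_log_div_le (hw : ∀ j, 0 < w j) (hp : ∀ j, 0 < p j) (hq : ∀ j, 0 < q j)
    (k : ι) :
    tailMass w p k * log (tailMass w p k / tailMass w q k) ≤
      ∑ l ∈ univ.filter (k ≤ ·), (w l)⁻¹ * p l * log (p l / q l) := by
  have key := sum_mul_log_sum_div_sum_le (s := univ.filter (k ≤ ·)) ⟨k, by simp⟩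
    (fun l _ => mul_pos (inv_pos.2 (hw l)) (hp l))
    (fun l _ => mul_pos (inv_pos.2 (hw l)) (hq l))
  simpa only [tailMass, mul_div_mul_left _ _ (inv_ne_zero (hw _).ne')] using key

theorem log_likelihood_sub_le (hw : ∀ j, 0 < w j) (hp : ∀ j, 0 < p j) (hq : ∀ j, 0 < q j) :
    log (likelihood ξ ζ w p) - log (likelihood ξ ζ w q) ≤
      ∑ j, emWeight ξ ζ w p j * log (p j / q j) := by
  have hS := tailMass_pos hw hp
  have hcensored : ∀ k, (ζ k : ℝ) * log (tailMass w p k / tailMass w q k) ≤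
      ζ k / tailMass w p k *
        ∑ l ∈ univ.filter (k ≤ ·), (w l)⁻¹ * p l * log (p l / q l) :=
    fun k => calc
      _ = ζ k / tailMass w p k * (tailMass w p k * log (tailMass w p k / tailMass w q k)) := by
          field_simp [(hS k).ne']
      _ ≤ _ := mul_le_mul_of_nonneg_left (tailMass_mul_log_div_le hw hp hq k)
          (div_nonneg (Nat.cast_nonneg _) (hS k).le)
  rw [log_likelihood hw hp, log_likelihood hw hq, ← sum_sub_distrib]
  calc _ = ∑ j, (ξ j * log (p j / q j) + ζ j * log (tailMass w p j / tailMass w q j)) :=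
        sum_congr rfl fun j _ => by
          rw [log_div (hp j).ne' (hq j).ne', log_div (hS j).ne' (tailMass_pos hw hq j).ne']
          ring
    _ ≤ ∑ j, (ξ j * log (p j / q j) + ζ j / tailMass w p j *
          ∑ l ∈ univ.filter (j ≤ ·), (w l)⁻¹ * p l * log (p l / q l)) :=
        sum_le_sum fun j _ => add_le_add le_rfl (hcensored j)
    _ = _ := by
        rw [sum_add_distrib, ← sum_mul_sum_filter_le_comm, ← sum_add_distrib]
        exact sum_congr rfl fun j _ => by rw [emWeight]; ring

theorem likelihood_le_likelihood_emMap (hw : ∀ j, 0 < w j) (hξζ : ∀ j, 1 ≤ ξ j + ζ j)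
    (hp : ∀ j, 0 < p j) (hps : ∑ j, p j = 1) :
    likelihood ξ ζ w p ≤ likelihood ξ ζ w (emMap ξ ζ w p) := by
  set N : ℝ := ((∑ i, ξ i + ∑ i, ζ i : ℕ) : ℝ)
  set q := emMap ξ ζ w p
  obtain ⟨j₀⟩ : Nonempty ι := (isEmpty_or_nonempty ι).resolve_left fun _ => by simp at hps
  have hN : 0 < N := by
    have := (hξζ j₀).trans (single_le_sum (f := fun i => ξ i + ζ i) (by simp) (mem_univ j₀))
    rw [sum_add_distrib] at this
    exact Nat.cast_pos.2 this
  have hweight : ∀ j, emWeight ξ ζ w p j = N * q j := fun j => by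
    rw [show q j = N⁻¹ * emWeight ξ ζ w p j from rfl, mul_inv_cancel_left₀ hN.ne']
  have hq : ∀ j, 0 < q j := fun j =>
    pos_of_mul_pos_right ((hweight j) ▸ emWeight_pos hw hp (hξζ j)) hN.le
  have hqs : ∑ j, q j = 1 := by
    have := sum_emWeight hw hp (ξ := ξ) (ζ := ζ)
    rw [sum_congr rfl fun j _ => hweight j, ← mul_sum] at this
    exact (mul_eq_left₀ hN.ne').1 this
  have hgibbs := sum_mul_log_div_nonneg (s := univ) (fun j _ => hq j) (fun j _ => hp j)
    (hqs.trans hps.symm)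
  have hlog : log (likelihood ξ ζ w p) - log (likelihood ξ ζ w q) ≤ 0 := calc
    _ ≤ ∑ j, emWeight ξ ζ w p j * log (p j / q j) := log_likelihood_sub_le hw hp hq
    _ = -(N * ∑ j, q j * log (q j / p j)) := by
        simp only [hweight, log_div_eq_neg_log_div_rev (p _), mul_neg, sum_neg_distrib, mul_sum,
          mul_assoc]
    _ ≤ 0 := neg_nonpos.2 (mul_nonneg hN.le hgibbs)
  exact (log_le_log_iff (likelihood_pos hw hp) (likelihood_pos hw hq)).1 (sub_nonpos.1 hlog)

end EM

theorem stmt3_general (h : ℕ) (w : Fin h → ℝ) (hw : ∀ j, 0 < w j)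
    (ξ ζ : Fin h → ℕ) (hξζ : ∀ j, 1 ≤ ξ j + ζ j)
    (m n : ℕ) (hm : m = ∑ j, ξ j) (hn : n = ∑ j, ζ j)
    (L : (Fin h → ℝ) → ℝ)
    (hL : ∀ p, L p = ∏ j, p j ^ ξ j *
      (∑ k ∈ Finset.univ.filter (fun k => j ≤ k), p k / w k) ^ ζ j)
    (T : (Fin h → ℝ) → (Fin h → ℝ))
    (hT : ∀ p : Fin h → ℝ, ((∀ j, 0 < p j) ∧ ∑ j, p j = 1) → ∀ j,
      T p j = (↑(m + n) : ℝ)⁻¹ *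
        ((ξ j : ℝ) + (w j)⁻¹ * p j *
          ∑ k ∈ Finset.univ.filter (fun k => k ≤ j),
            (ζ k : ℝ) / (∑ l ∈ Finset.univ.filter (fun l => k ≤ l), (w l)⁻¹ * p l)))
    (p : Fin h → ℝ) (hp : (∀ j, 0 < p j) ∧ ∑ j, p j = 1) :
    L p ≤ L (T p) := by
  subst hm hn
  have hL' : L = likelihood ξ ζ w := funext fun v => by
    simp only [hL, likelihood, tailMass, div_eq_inv_mul]
  have hT' : T p = emMap ξ ζ w p := funext (hT p hp)
  rw [hL', hT']
  exact likelihood_le_likelihood_emMap hw hξζ hp.1 hp.2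

/-- Each EM iteration does not decrease the likelihood:
for every `p` in the open simplex `Δ°`, `L(T(p)) ≥ L(p)`. -/
theorem stmt3 (h : ℕ) (hh : 1 ≤ h) (w : Fin h → ℝ) (hw : ∀ j, 0 < w j)
    (ξ ζ : Fin h → ℕ) (hξζ : ∀ j, 1 ≤ ξ j + ζ j)
    (m n : ℕ) (hm : m = ∑ j, ξ j) (hn : n = ∑ j, ζ j)
    (L : (Fin h → ℝ) → ℝ)
    (hL : ∀ p, L p = ∏ j, p j ^ ξ j *
      (∑ k ∈ Finset.univ.filter (fun k => j ≤ k), p k / w k) ^ ζ j)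
    (T : (Fin h → ℝ) → (Fin h → ℝ))
    (hT : ∀ p : Fin h → ℝ, ((∀ j, 0 < p j) ∧ ∑ j, p j = 1) → ∀ j,
      T p j = (↑(m + n) : ℝ)⁻¹ *
        ((ξ j : ℝ) + (w j)⁻¹ * p j *
          ∑ k ∈ Finset.univ.filter (fun k => k ≤ j),
            (ζ k : ℝ) / (∑ l ∈ Finset.univ.filter (fun l => k ≤ l), (w l)⁻¹ * p l)))
    (p : Fin h → ℝ) (hp : (∀ j, 0 < p j) ∧ ∑ j, p j = 1) :
    L p ≤ L (T p) :=
  stmt3_general h w hw ξ ζ hξζ m n hm hn L hL T hT p hp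
end

section
/- For any starting point p_0 in the open simplex Δ°, the sequence of EM iterates p_{n+1} = T(p_n) is well defined (each p_n ∈ Δ°), and the sequence of likelihood values L(p_n) converges to a finite limit as n → ∞. -/
open Finset Filter

private lemma rpow_sum_aux {x : ℝ} (hx : 0 < x) {α : Type*} (s : Finset α) (f : α → ℝ) :
    x ^ (∑ i ∈ s, f i) = ∏ i ∈ s, x ^ (f i) := by
  induction s using Finset.cons_induction with
  | empty => simp
  | cons a s ha ih => rw [Finset.sum_cons, Finset.prod_cons, Real.rpow_add hx, ih]

/-- One step of EM: preservation of the open simplex and monotonicity of the likelihood. -/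
private lemma em_step (h : ℕ) (w : Fin h → ℝ) (hw : ∀ j, 0 < w j)
    (ξ ζ : Fin h → ℕ) (hξζ : ∀ j, 1 ≤ ξ j + ζ j) (hh : 1 ≤ h)
    (m n : ℕ) (hm : m = ∑ j, ξ j) (hn : n = ∑ j, ζ j)
    (p : Fin h → ℝ) (hp : ∀ j, 0 < p j) (hps : ∑ j, p j = 1)
    (q : Fin h → ℝ)
    (hq : ∀ j, q j = (↑(m + n) : ℝ)⁻¹ * ((ξ j : ℝ) + (w j)⁻¹ * p j *
          ∑ k ∈ Finset.univ.filter (fun k => k ≤ j),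
            (ζ k : ℝ) / (∑ l ∈ Finset.univ.filter (fun l => k ≤ l), (w l)⁻¹ * p l))) :
    (∀ j, 0 < q j) ∧ (∑ j, q j = 1) ∧
      (∏ j, p j ^ ξ j * (∑ k ∈ Finset.univ.filter (fun k => j ≤ k), p k / w k) ^ ζ j)
        ≤ ∏ j, q j ^ ξ j * (∑ k ∈ Finset.univ.filter (fun k => j ≤ k), q k / w k) ^ ζ j := by
  classical
  set F : Fin h → Finset (Fin h) := fun j => Finset.univ.filter (fun k => j ≤ k) with hF
  set S : Fin h → ℝ := fun j => ∑ l ∈ F j, (w l)⁻¹ * p l with hSdef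
  have hSpos : ∀ j, 0 < S j := fun j =>
    Finset.sum_pos (fun l _ => mul_pos (inv_pos.2 (hw l)) (hp l)) ⟨j, by simp [hF]⟩
  set c : Fin h → ℝ := fun k =>
    (w k)⁻¹ * p k * ∑ j ∈ Finset.univ.filter (fun j => j ≤ k), (ζ j : ℝ) / S j with hcdef
  have hq' : ∀ j, q j = (↑(m + n) : ℝ)⁻¹ * ((ξ j : ℝ) + c j) := hq
  have hcnonneg : ∀ k, 0 ≤ c k := fun k =>
    mul_nonneg (mul_nonneg (inv_pos.2 (hw k)).le (hp k).le)
      (Finset.sum_nonneg fun j _ => div_nonneg (Nat.cast_nonneg _) (hSpos j).le)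
  have hmn : 0 < m + n := by
    have h1 : h ≤ m + n := by
      rw [hm, hn, ← Finset.sum_add_distrib]
      calc h = ∑ _j : Fin h, 1 := by simp
        _ ≤ ∑ j, (ξ j + ζ j) := Finset.sum_le_sum fun j _ => hξζ j
    omega
  have hmnR : (0 : ℝ) < (m + n : ℕ) := by exact_mod_cast hmn
  -- positivity of q
  have hqpos : ∀ j, 0 < q j := by
    intro j
    rw [hq' j]
    refine mul_pos (inv_pos.2 hmnR) ?_
    rcases Nat.lt_or_ge 0 (ξ j) with hj | hj
    · have h1 : (0 : ℝ) < ξ j := by exact_mod_cast hj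
      have := hcnonneg j
      linarith
    · have hζ : 1 ≤ ζ j := by have := hξζ j; omega
      have hc0 : 0 < c j := by
        refine mul_pos (mul_pos (inv_pos.2 (hw j)) (hp j)) ?_
        refine Finset.sum_pos' (fun k _ => div_nonneg (Nat.cast_nonneg _) (hSpos k).le)
          ⟨j, by simp, div_pos (by exact_mod_cast hζ) (hSpos j)⟩
      have : (0:ℝ) ≤ ξ j := Nat.cast_nonneg _
      linarith
  -- sum of c equals n
  have hsumc : ∑ k, c k = (n : ℝ) := by
    have h1 : ∀ k, c k = ∑ j ∈ Finset.univ.filter (fun j => j ≤ k),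
        (w k)⁻¹ * p k * ((ζ j : ℝ) / S j) := by
      intro k; rw [hcdef]; simp [Finset.mul_sum]
    rw [Finset.sum_congr rfl fun k _ => h1 k]
    rw [Finset.sum_comm' (t' := Finset.univ) (s' := fun j => F j)
      (by intro k j; simp [hF])]
    have h2 : ∀ j : Fin h, ∑ k ∈ F j, (w k)⁻¹ * p k * ((ζ j : ℝ) / S j) = (ζ j : ℝ) := by
      intro j
      rw [← Finset.sum_mul]
      have hSj : (∑ k ∈ F j, (w k)⁻¹ * p k) = S j := rfl
      rw [hSj, mul_comm, div_mul_cancel₀ _ (hSpos j).ne']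
    rw [Finset.sum_congr rfl fun j _ => h2 j, hn]
    push_cast; ring
  have hqsum : ∑ j, q j = 1 := by
    have h1 : ∑ j, q j = (↑(m + n) : ℝ)⁻¹ * ∑ j, ((ξ j : ℝ) + c j) := by
      rw [Finset.mul_sum]; exact Finset.sum_congr rfl fun j _ => hq' j
    rw [h1, Finset.sum_add_distrib, hsumc]
    have h2 : ∑ j, (ξ j : ℝ) = (m : ℝ) := by rw [hm]; push_cast; ring
    rw [h2]
    have h3 : ((m:ℝ) + n) ≠ 0 := by
      have h4 : (0:ℝ) < (m:ℝ) + n := by exact_mod_cast hmn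
      exact h4.ne'
    push_cast
    field_simp
  refine ⟨hqpos, hqsum, ?_⟩
  -- the likelihood inequality
  -- rewrite sums p k / w k as S
  have hLp : ∀ (r : Fin h → ℝ) (j : Fin h),
      (∑ k ∈ F j, r k / w k) = ∑ k ∈ F j, (w k)⁻¹ * r k := by
    intro r j; exact Finset.sum_congr rfl fun k _ => div_eq_inv_mul _ _
  -- per-index Jensen inequality
  have key : ∀ j, S j * ∏ k ∈ F j, (q k / p k) ^ ((w k)⁻¹ * p k / S j)
      ≤ ∑ k ∈ F j, (w k)⁻¹ * q k := by
    intro j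
    have hgm := Real.geom_mean_le_arith_mean_weighted (F j)
      (fun k => (w k)⁻¹ * p k / S j) (fun k => q k / p k)
      (fun k _ => div_nonneg (mul_nonneg (inv_pos.2 (hw k)).le (hp k).le) (hSpos j).le)
      (by rw [← Finset.sum_div]
          have hSj : (∑ k ∈ F j, (w k)⁻¹ * p k) = S j := rfl
          rw [hSj]; exact div_self (hSpos j).ne')
      (fun k _ => (div_pos (hqpos k) (hp k)).le)
    have h2 : ∑ k ∈ F j, ((w k)⁻¹ * p k / S j) * (q k / p k)
        = (∑ k ∈ F j, (w k)⁻¹ * q k) / S j := by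
      rw [Finset.sum_div]
      refine Finset.sum_congr rfl fun k _ => ?_
      have hwk := (hw k).ne'
      have hpk := (hp k).ne'
      have hSj := (hSpos j).ne'
      field_simp
    rw [h2] at hgm
    rw [mul_comm]
    exact (le_div_iff₀ (hSpos j)).mp hgm
  -- per-factor inequality
  have key2 : ∀ j, (p j ^ ξ j * S j ^ ζ j) *
      ((q j / p j) ^ ((ξ j : ℝ)) *
        ∏ k ∈ F j, (q k / p k) ^ (((ζ j : ℝ)) * ((w k)⁻¹ * p k / S j)))
      ≤ q j ^ ξ j * (∑ k ∈ F j, (w k)⁻¹ * q k) ^ ζ j := by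
    intro j
    have hqp : ∀ k, (0:ℝ) < q k / p k := fun k => div_pos (hqpos k) (hp k)
    have e1 : (q j / p j) ^ ((ξ j : ℝ)) = (q j / p j) ^ (ξ j) :=
      Real.rpow_natCast _ _
    have e2 : ∀ k, (q k / p k) ^ (((ζ j : ℝ)) * ((w k)⁻¹ * p k / S j))
        = ((q k / p k) ^ ((w k)⁻¹ * p k / S j)) ^ (ζ j) := by
      intro k
      rw [mul_comm ((ζ j : ℝ)), Real.rpow_mul (hqp k).le, Real.rpow_natCast]
    calc (p j ^ ξ j * S j ^ ζ j) *
        ((q j / p j) ^ ((ξ j : ℝ)) *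
          ∏ k ∈ F j, (q k / p k) ^ (((ζ j : ℝ)) * ((w k)⁻¹ * p k / S j)))
        = q j ^ ξ j * (S j * ∏ k ∈ F j, (q k / p k) ^ ((w k)⁻¹ * p k / S j)) ^ ζ j := by
          rw [e1, Finset.prod_congr rfl fun k _ => e2 k, Finset.prod_pow, mul_pow]
          have hqj : p j ^ ξ j * (q j / p j) ^ ξ j = q j ^ ξ j := by
            rw [← mul_pow, mul_comm, div_mul_cancel₀ _ (hp j).ne']
          rw [← hqj]; ring
      _ ≤ q j ^ ξ j * (∑ k ∈ F j, (w k)⁻¹ * q k) ^ ζ j := by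
          refine mul_le_mul_of_nonneg_left ?_ (pow_nonneg (hqpos j).le _)
          refine pow_le_pow_left₀ ?_ (key j) _
          have : 0 < S j * ∏ k ∈ F j, (q k / p k) ^ ((w k)⁻¹ * p k / S j) := by
            refine mul_pos (hSpos j) (Finset.prod_pos fun k _ => ?_)
            exact Real.rpow_pos_of_pos (hqp k) _
          linarith
  -- take products
  have prodineq :
      (∏ j, p j ^ ξ j * S j ^ ζ j) *
        ∏ j, ((q j / p j) ^ ((ξ j : ℝ)) *
          ∏ k ∈ F j, (q k / p k) ^ (((ζ j : ℝ)) * ((w k)⁻¹ * p k / S j)))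
      ≤ ∏ j, q j ^ ξ j * (∑ k ∈ F j, (w k)⁻¹ * q k) ^ ζ j := by
    rw [← Finset.prod_mul_distrib]
    refine Finset.prod_le_prod (fun j _ => ?_) (fun j _ => key2 j)
    have hqp : ∀ k, (0:ℝ) < q k / p k := fun k => div_pos (hqpos k) (hp k)
    have hposL : 0 < p j ^ ξ j * S j ^ ζ j *
        ((q j / p j) ^ ((ξ j : ℝ)) *
          ∏ k ∈ F j, (q k / p k) ^ (((ζ j : ℝ)) * ((w k)⁻¹ * p k / S j))) :=
      mul_pos (mul_pos (pow_pos (hp j) _) (pow_pos (hSpos j) _))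
        (mul_pos (Real.rpow_pos_of_pos (hqp j) _)
          (Finset.prod_pos fun k _ => Real.rpow_pos_of_pos (hqp k) _))
    linarith
  -- identify the correction factor
  have hqp : ∀ k, (0:ℝ) < q k / p k := fun k => div_pos (hqpos k) (hp k)
  have corr : ∏ j, ((q j / p j) ^ ((ξ j : ℝ)) *
        ∏ k ∈ F j, (q k / p k) ^ (((ζ j : ℝ)) * ((w k)⁻¹ * p k / S j)))
      = (∏ k, (q k / p k) ^ (q k)) ^ (m + n) := by
    rw [Finset.prod_mul_distrib]
    have swap : (∏ j, ∏ k ∈ F j, (q k / p k) ^ (((ζ j : ℝ)) * ((w k)⁻¹ * p k / S j)))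
        = ∏ k, (q k / p k) ^ (c k) := by
      rw [Finset.prod_comm' (t' := Finset.univ)
        (s' := fun k => Finset.univ.filter (fun j => j ≤ k)) (by intro j k; simp [hF])]
      refine Finset.prod_congr rfl fun k _ => ?_
      rw [← rpow_sum_aux (hqp k)]
      congr 1
      have hck : c k = (w k)⁻¹ * p k *
          ∑ j ∈ Finset.univ.filter (fun j => j ≤ k), (ζ j : ℝ) / S j := rfl
      rw [hck, Finset.mul_sum]
      exact Finset.sum_congr rfl fun j _ => by ring
    rw [swap, ← Finset.prod_mul_distrib]
    have step : ∀ k : Fin h, (q k / p k) ^ ((ξ k : ℝ)) * (q k / p k) ^ (c k)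
        = ((q k / p k) ^ (q k)) ^ (m + n) := by
      intro k
      rw [← Real.rpow_add (hqp k)]
      have hek : (ξ k : ℝ) + c k = (↑(m + n) : ℝ) * q k := by
        rw [hq' k, ← mul_assoc, mul_inv_cancel₀ hmnR.ne', one_mul]
      rw [hek, mul_comm, Real.rpow_mul (hqp k).le, Real.rpow_natCast]
    rw [Finset.prod_congr rfl fun k _ => step k, Finset.prod_pow]
  -- the correction factor is at least 1
  have hG : 1 ≤ ∏ k, (q k / p k) ^ (q k) := by
    set B : ℝ := ∏ k, (p k / q k) ^ (q k) with hBdef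
    have hBpos : 0 < B :=
      Finset.prod_pos fun k _ => Real.rpow_pos_of_pos (div_pos (hp k) (hqpos k)) _
    have hB1 : B ≤ 1 := by
      have hgm := Real.geom_mean_le_arith_mean_weighted Finset.univ q
        (fun k => p k / q k) (fun k _ => (hqpos k).le) hqsum
        (fun k _ => (div_pos (hp k) (hqpos k)).le)
      have : ∑ k, q k * (p k / q k) = 1 := by
        rw [← hps]
        exact Finset.sum_congr rfl fun k _ => by
          rw [mul_comm, div_mul_cancel₀ _ (hqpos k).ne']
      rw [this] at hgm
      exact hgm
    have hGB : (∏ k, (q k / p k) ^ (q k)) * B = 1 := by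
      rw [hBdef, ← Finset.prod_mul_distrib]
      have : ∀ k : Fin h, (q k / p k) ^ (q k) * (p k / q k) ^ (q k) = 1 := by
        intro k
        rw [← Real.mul_rpow (div_pos (hqpos k) (hp k)).le (div_pos (hp k) (hqpos k)).le,
          div_mul_div_comm, mul_comm (q k), div_self (mul_pos (hp k) (hqpos k)).ne',
          Real.one_rpow]
      simp [this]
    have hGpos : 0 < ∏ k, (q k / p k) ^ (q k) :=
      Finset.prod_pos fun k _ => Real.rpow_pos_of_pos (hqp k) _
    nlinarith
  -- conclude
  have hLpS : (∏ j, p j ^ ξ j * (∑ k ∈ F j, p k / w k) ^ ζ j)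
      = ∏ j, p j ^ ξ j * S j ^ ζ j := by
    refine Finset.prod_congr rfl fun j _ => ?_
    rw [hLp p j]
  have hLqS : (∏ j, q j ^ ξ j * (∑ k ∈ F j, q k / w k) ^ ζ j)
      = ∏ j, q j ^ ξ j * (∑ k ∈ F j, (w k)⁻¹ * q k) ^ ζ j := by
    refine Finset.prod_congr rfl fun j _ => ?_
    rw [hLp q j]
  rw [hLpS, hLqS]
  calc (∏ j, p j ^ ξ j * S j ^ ζ j)
      ≤ (∏ j, p j ^ ξ j * S j ^ ζ j) * (∏ k, (q k / p k) ^ (q k)) ^ (m + n) := by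
        refine le_mul_of_one_le_right ?_ (one_le_pow₀ hG)
        exact Finset.prod_nonneg fun j _ =>
          mul_nonneg (pow_nonneg (hp j).le _) (pow_nonneg (hSpos j).le _)
    _ ≤ ∏ j, q j ^ ξ j * (∑ k ∈ F j, (w k)⁻¹ * q k) ^ ζ j := by
        rw [← corr]; exact prodineq

/-- For any starting point `p₀` in the open simplex `Δ°`, the sequence of
EM iterates `p_{N+1} = T(p_N)` is well defined (each `p_N ∈ Δ°`), and the sequence of
likelihood values `L(p_N)` converges to a finite limit as `N → ∞`. -/
theorem stmt4 (h : ℕ) (hh : 1 ≤ h) (w : Fin h → ℝ) (hw : ∀ j, 0 < w j)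
    (ξ ζ : Fin h → ℕ) (hξζ : ∀ j, 1 ≤ ξ j + ζ j)
    (m n : ℕ) (hm : m = ∑ j, ξ j) (hn : n = ∑ j, ζ j)
    (L : (Fin h → ℝ) → ℝ)
    (hL : ∀ p, L p = ∏ j, p j ^ ξ j *
      (∑ k ∈ Finset.univ.filter (fun k => j ≤ k), p k / w k) ^ ζ j)
    (T : (Fin h → ℝ) → (Fin h → ℝ))
    (hT : ∀ p : Fin h → ℝ, ((∀ j, 0 < p j) ∧ ∑ j, p j = 1) → ∀ j,
      T p j = (↑(m + n) : ℝ)⁻¹ *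
        ((ξ j : ℝ) + (w j)⁻¹ * p j *
          ∑ k ∈ Finset.univ.filter (fun k => k ≤ j),
            (ζ k : ℝ) / (∑ l ∈ Finset.univ.filter (fun l => k ≤ l), (w l)⁻¹ * p l)))
    (p₀ : Fin h → ℝ) (hp₀ : (∀ j, 0 < p₀ j) ∧ ∑ j, p₀ j = 1) :
    (∀ N : ℕ, (∀ j, 0 < (T^[N] p₀) j) ∧ ∑ j, (T^[N] p₀) j = 1) ∧
      ∃ ℓ : ℝ, Tendsto (fun N : ℕ => L (T^[N] p₀)) atTop (nhds ℓ) := by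
  have inv : ∀ N : ℕ, (∀ j, 0 < (T^[N] p₀) j) ∧ ∑ j, (T^[N] p₀) j = 1 := by
    intro N
    induction N with
    | zero => simpa using hp₀
    | succ N ih =>
      rw [Function.iterate_succ_apply']
      have hstep := em_step h w hw ξ ζ hξζ hh m n hm hn (T^[N] p₀) ih.1 ih.2
        (T (T^[N] p₀)) (hT _ ih)
      exact ⟨hstep.1, hstep.2.1⟩
  refine ⟨inv, ?_⟩
  have mono : Monotone fun N : ℕ => L (T^[N] p₀) := by
    apply monotone_nat_of_le_succ
    intro N
    simp only [hL, Function.iterate_succ_apply']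
    exact (em_step h w hw ξ ζ hξζ hh m n hm hn (T^[N] p₀) (inv N).1 (inv N).2
      (T (T^[N] p₀)) (hT _ (inv N))).2.2
  have bdd : BddAbove (Set.range fun N : ℕ => L (T^[N] p₀)) := by
    refine ⟨∏ j, (∑ k, (w k)⁻¹) ^ ζ j, ?_⟩
    rintro x ⟨N, rfl⟩
    show L (T^[N] p₀) ≤ _
    obtain ⟨hpos, hsum⟩ := inv N
    have hle1 : ∀ k, (T^[N] p₀) k ≤ 1 := by
      intro k
      rw [← hsum]
      exact Finset.single_le_sum (fun i _ => (hpos i).le) (Finset.mem_univ k)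
    rw [hL]
    refine Finset.prod_le_prod (fun j _ => ?_) (fun j _ => ?_)
    · exact mul_nonneg (pow_nonneg (hpos j).le _)
        (pow_nonneg (Finset.sum_nonneg fun k _ => div_nonneg (hpos k).le (hw k).le) _)
    · have h1 : (T^[N] p₀) j ^ ξ j ≤ 1 := pow_le_one₀ (hpos j).le (hle1 j)
      have h2 : (∑ k ∈ Finset.univ.filter (fun k => j ≤ k), (T^[N] p₀) k / w k)
          ≤ ∑ k, (w k)⁻¹ := by
        calc (∑ k ∈ Finset.univ.filter (fun k => j ≤ k), (T^[N] p₀) k / w k)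
            ≤ ∑ k ∈ Finset.univ.filter (fun k => j ≤ k), (w k)⁻¹ := by
              refine Finset.sum_le_sum fun k _ => ?_
              rw [div_eq_mul_inv]
              calc (T^[N] p₀) k * (w k)⁻¹ ≤ 1 * (w k)⁻¹ :=
                mul_le_mul_of_nonneg_right (hle1 k) (inv_pos.2 (hw k)).le
                _ = (w k)⁻¹ := one_mul _
          _ ≤ ∑ k, (w k)⁻¹ := Finset.sum_le_sum_of_subset_of_nonneg
              (Finset.filter_subset _ _) (fun k _ _ => (inv_pos.2 (hw k)).le)
      calc (T^[N] p₀) j ^ ξ j *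
            (∑ k ∈ Finset.univ.filter (fun k => j ≤ k), (T^[N] p₀) k / w k) ^ ζ j
          ≤ 1 * (∑ k, (w k)⁻¹) ^ ζ j := by
            refine mul_le_mul h1 (pow_le_pow_left₀ ?_ h2 _) ?_ zero_le_one
            · exact Finset.sum_nonneg fun k _ => div_nonneg (hpos k).le (hw k).le
            · exact pow_nonneg (Finset.sum_nonneg fun k _ =>
                div_nonneg (hpos k).le (hw k).le) _
        _ = (∑ k, (w k)⁻¹) ^ ζ j := one_mul _
  exact ⟨⨆ N, L (T^[N] p₀), tendsto_atTop_ciSup mono bdd⟩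
end

section
/- Every fixed point of the EM map lying in the open simplex maximizes the likelihood: if p ∈ Δ° satisfies T(p) = p, then L(p) ≥ L(q) for all q ∈ Δ. -/
open Finset

/-- partial sum of `p k / w k` over `k ≥ j`. -/
noncomputable def S5 {h : ℕ} (w p : Fin h → ℝ) (j : Fin h) : ℝ :=
  ∑ k ∈ Finset.univ.filter (fun k => j ≤ k), p k / w k

lemma S5_def {h : ℕ} (w p : Fin h → ℝ) (j : Fin h) :
    S5 w p j = ∑ k ∈ Finset.univ.filter (fun k => j ≤ k), p k / w k := rfl

lemma pow_le_exp5 (t : ℝ) (ht : 0 ≤ t) (a : ℕ) :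
    t ^ a ≤ Real.exp ((a : ℝ) * (t - 1)) := by
  calc t ^ a ≤ Real.exp (t - 1) ^ a := by
        apply pow_le_pow_left₀ ht
        linarith [Real.add_one_le_exp (t - 1)]
    _ = Real.exp ((a : ℝ) * (t - 1)) := (Real.exp_nat_mul _ a).symm

/-- Every fixed point of the EM map lying in the open simplex maximizes
the likelihood: if `p ∈ Δ°` satisfies `T(p) = p`, then `L(p) ≥ L(q)` for all `q ∈ Δ`. -/
theorem stmt5 (h : ℕ) (hh : 1 ≤ h) (w : Fin h → ℝ) (hw : ∀ j, 0 < w j)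
    (ξ ζ : Fin h → ℕ) (hξζ : ∀ j, 1 ≤ ξ j + ζ j)
    (m n : ℕ) (hm : m = ∑ j, ξ j) (hn : n = ∑ j, ζ j)
    (L : (Fin h → ℝ) → ℝ)
    (hL : ∀ p, L p = ∏ j, p j ^ ξ j *
      (∑ k ∈ Finset.univ.filter (fun k => j ≤ k), p k / w k) ^ ζ j)
    (T : (Fin h → ℝ) → (Fin h → ℝ))
    (hT : ∀ p : Fin h → ℝ, ((∀ j, 0 < p j) ∧ ∑ j, p j = 1) → ∀ j,
      T p j = (↑(m + n) : ℝ)⁻¹ *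
        ((ξ j : ℝ) + (w j)⁻¹ * p j *
          ∑ k ∈ Finset.univ.filter (fun k => k ≤ j),
            (ζ k : ℝ) / (∑ l ∈ Finset.univ.filter (fun l => k ≤ l), (w l)⁻¹ * p l)))
    (p : Fin h → ℝ) (hp : (∀ j, 0 < p j) ∧ ∑ j, p j = 1)
    (hfix : T p = p) :
    ∀ q : Fin h → ℝ, ((∀ j, 0 ≤ q j) ∧ ∑ j, q j = 1) → L q ≤ L p := by
  rintro q ⟨hq1, hq2⟩
  obtain ⟨hp1, hp2⟩ := hp
  set j0 : Fin h := ⟨0, hh⟩ with hj0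
  have hNpos : 0 < m + n := by
    have h1 : ξ j0 ≤ m := hm ▸ Finset.single_le_sum (fun i _ => Nat.zero_le _) (mem_univ j0)
    have h2 : ζ j0 ≤ n := hn ▸ Finset.single_le_sum (fun i _ => Nat.zero_le _) (mem_univ j0)
    have := hξζ j0; omega
  have hNne : ((m + n : ℕ) : ℝ) ≠ 0 := Nat.cast_ne_zero.mpr hNpos.ne'
  have hSp_pos : ∀ j, 0 < S5 w p j := fun j =>
    Finset.sum_pos (fun k _ => div_pos (hp1 k) (hw k)) ⟨j, by simp⟩
  have hSq_nn : ∀ j, 0 ≤ S5 w q j := fun j =>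
    Finset.sum_nonneg (fun k _ => div_nonneg (hq1 k) (hw k).le)
  -- fixed point identity
  have hkey : ∀ j, (ξ j : ℝ) / p j
      + (w j)⁻¹ * (∑ k ∈ Finset.univ.filter (fun k => k ≤ j), (ζ k : ℝ) / S5 w p k)
      = ((m + n : ℕ) : ℝ) := by
    intro j
    have h1 := (hT p ⟨hp1, hp2⟩ j).symm.trans (congrFun hfix j)
    simp_rw [inv_mul_eq_div, ← S5_def] at h1
    have hpj : p j ≠ 0 := (hp1 j).ne'
    rw [div_eq_iff hNne] at h1
    rw [div_add' _ _ _ hpj, div_eq_iff hpj]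
    linear_combination h1
  -- double sum swap
  have swap : ∀ f : Fin h → Fin h → ℝ,
      (∑ j, ∑ k ∈ Finset.univ.filter (fun k => j ≤ k), f j k)
      = ∑ k, ∑ j ∈ Finset.univ.filter (fun j => j ≤ k), f j k := by
    intro f
    simp_rw [Finset.sum_filter]
    exact Finset.sum_comm
  -- key sum identity
  have hsum : ∑ j, ((ξ j : ℝ) * (q j / p j) + (ζ j : ℝ) * (S5 w q j / S5 w p j))
      = ((m + n : ℕ) : ℝ) := by
    have e1 : ∀ j : Fin h, (ζ j : ℝ) * (S5 w q j / S5 w p j)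
        = ∑ k ∈ Finset.univ.filter (fun k => j ≤ k), (ζ j : ℝ) / S5 w p j * (q k / w k) := by
      intro j
      have : (ζ j : ℝ) * (S5 w q j / S5 w p j) = ((ζ j : ℝ) / S5 w p j) * S5 w q j := by ring
      rw [this, S5_def w q j, Finset.mul_sum]
    simp_rw [e1]
    rw [Finset.sum_add_distrib, swap, ← Finset.sum_add_distrib]
    have e2 : ∀ k : Fin h, (ξ k : ℝ) * (q k / p k)
        + (∑ j ∈ Finset.univ.filter (fun j => j ≤ k), (ζ j : ℝ) / S5 w p j * (q k / w k))
        = q k * ((m + n : ℕ) : ℝ) := by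
      intro k
      rw [← Finset.sum_mul, ← hkey k]
      ring
    simp_rw [e2]
    rw [← Finset.sum_mul, hq2, one_mul]
  -- AM-GM
  have hR : (∏ j, (q j / p j) ^ ξ j * (S5 w q j / S5 w p j) ^ ζ j) ≤ 1 := by
    have hqp : ∀ j, (0:ℝ) ≤ q j / p j := fun j => div_nonneg (hq1 j) (hp1 j).le
    have hSS : ∀ j, (0:ℝ) ≤ S5 w q j / S5 w p j := fun j => div_nonneg (hSq_nn j) (hSp_pos j).le
    calc (∏ j, (q j / p j) ^ ξ j * (S5 w q j / S5 w p j) ^ ζ j)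
        ≤ ∏ j, Real.exp ((ξ j : ℝ) * (q j / p j - 1)) * Real.exp ((ζ j : ℝ) * (S5 w q j / S5 w p j - 1)) := by
          apply Finset.prod_le_prod
          · intro j _
            exact mul_nonneg (pow_nonneg (hqp j) _) (pow_nonneg (hSS j) _)
          · intro j _
            exact mul_le_mul (pow_le_exp5 _ (hqp j) _) (pow_le_exp5 _ (hSS j) _)
              (pow_nonneg (hSS j) _) (Real.exp_nonneg _)
      _ = Real.exp (∑ j, ((ξ j : ℝ) * (q j / p j - 1) + (ζ j : ℝ) * (S5 w q j / S5 w p j - 1))) := by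
          simp_rw [← Real.exp_add]
          rw [Real.exp_sum]
      _ = Real.exp 0 := by
          congr 1
          have e3 : ∑ j, ((ξ j : ℝ) * (q j / p j - 1) + (ζ j : ℝ) * (S5 w q j / S5 w p j - 1))
              = (∑ j, ((ξ j : ℝ) * (q j / p j) + (ζ j : ℝ) * (S5 w q j / S5 w p j)))
                - ∑ j, ((ξ j : ℝ) + (ζ j : ℝ)) := by
            rw [← Finset.sum_sub_distrib]
            exact Finset.sum_congr rfl fun j _ => by ring
          have e4 : ∑ j, ((ξ j : ℝ) + (ζ j : ℝ)) = ((m + n : ℕ) : ℝ) := by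
            rw [Finset.sum_add_distrib]
            push_cast [hm, hn]
            ring
          rw [e3, hsum, e4, sub_self]
      _ = 1 := Real.exp_zero
  -- factorization
  have hLp_pos : 0 < L p := by
    rw [hL]
    exact Finset.prod_pos fun j _ => mul_pos (pow_pos (hp1 j) _) (pow_pos (hSp_pos j) _)
  have hfactor : L q = L p * ∏ j, (q j / p j) ^ ξ j * (S5 w q j / S5 w p j) ^ ζ j := by
    rw [hL q, hL p, ← Finset.prod_mul_distrib]
    apply Finset.prod_congr rfl
    intro j _
    simp_rw [← S5_def]
    have h1 : (p j) ^ ξ j ≠ 0 := pow_ne_zero _ (hp1 j).ne'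
    have h2 : (S5 w p j) ^ ζ j ≠ 0 := pow_ne_zero _ (hSp_pos j).ne'
    rw [div_pow, div_pow]
    field_simp
  rw [hfactor]
  exact mul_le_of_le_one_right hLp_pos.le hR
end

section
/- If the maximizer p* of the likelihood L over the simplex Δ has all coordinates positive (p*_j > 0 for every j), then for every starting point p_0 in the open simplex Δ°, the EM iterates p_{n+1} = T(p_n) converge to p* as n → ∞. -/
/-!
The likelihood is a product `∏ₐ (A p)ₐ ^ cₐ` of linear forms with nonnegative coefficients
(the coordinates `p j` and the weighted tail sums `∑_{l ≥ k} p l / w l`), and the EM map is the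
multiplicative update `T p = p · ∇ log L(p) / M` with `M = ∑ₐ cₐ`. Jensen's inequality for `log`
gives the ascent `log L (T p) ≥ log L p + M · KL(T p ‖ p)`, so an interior maximizer `p*` is a
fixed point of `T`. At that fixed point Jensen gives
`log L p* - log L p ≤ M · (KL(p* ‖ p) - KL(p* ‖ T p))`: the divergence `KL(p* ‖ p_N)` is a
Lyapunov function, the gaps `log L p* - log L p_N` are summable and `L p_N → L p*`. The linear
forms determine the point (the system is triangular) and `log L` is concave, so `p*` is the only
maximizer on the compact simplex, and every cluster point of `p_N` is `p*`.
-/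

open Finset Filter Real Topology Matrix InformationTheory

section RelEntropy

variable {ι : Type*} [Fintype ι]

noncomputable def relEntropy (p q : ι → ℝ) : ℝ := ∑ j, p j * log (p j / q j)

lemma relEntropy_eq_sum_mul_klFun {p q : ι → ℝ} (hq : ∀ j, 0 < q j)
    (hpq : ∑ j, p j = ∑ j, q j) : relEntropy p q = ∑ j, q j * klFun (p j / q j) := by
  have hterm : ∀ j, q j * klFun (p j / q j) = p j * log (p j / q j) + (q j - p j) := by
    intro j
    have := (hq j).ne'
    rw [klFun_apply]
    field_simp
    ring
  rw [sum_congr rfl fun j _ => hterm j, sum_add_distrib, sum_sub_distrib, hpq, sub_self,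
    add_zero, relEntropy]

lemma relEntropy_nonneg {p q : ι → ℝ} (hp : ∀ j, 0 ≤ p j) (hq : ∀ j, 0 < q j)
    (hpq : ∑ j, p j = ∑ j, q j) : 0 ≤ relEntropy p q := by
  rw [relEntropy_eq_sum_mul_klFun hq hpq]
  exact sum_nonneg fun j _ =>
    mul_nonneg (hq j).le (klFun_nonneg (div_nonneg (hp j) (hq j).le))

lemma eq_of_relEntropy_nonpos {p q : ι → ℝ} (hp : ∀ j, 0 ≤ p j) (hq : ∀ j, 0 < q j)
    (hpq : ∑ j, p j = ∑ j, q j) (h : relEntropy p q ≤ 0) : p = q := by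
  have hratio : ∀ j, 0 ≤ p j / q j := fun j => div_nonneg (hp j) (hq j).le
  have hterm : ∀ j ∈ univ, 0 ≤ q j * klFun (p j / q j) := fun j _ =>
    mul_nonneg (hq j).le (klFun_nonneg (hratio j))
  rw [relEntropy_eq_sum_mul_klFun hq hpq] at h
  have hzero := (sum_eq_zero_iff_of_nonneg hterm).1 (le_antisymm h (sum_nonneg hterm))
  funext j
  have hkl := (mul_eq_zero.1 (hzero j (mem_univ j))).resolve_left (hq j).ne'
  rwa [klFun_eq_zero_iff (hratio j), div_eq_one_iff_eq (hq j).ne'] at hkl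

end RelEntropy

lemma sum_mul_log_le_log_sum_mul {κ : Type*} [Fintype κ] {t x : κ → ℝ} (ht : ∀ a, 0 ≤ t a)
    (ht1 : ∑ a, t a = 1) (hx : ∀ a, 0 < x a) :
    ∑ a, t a * log (x a) ≤ log (∑ a, t a * x a) := by
  simpa only [smul_eq_mul] using
    strictConcaveOn_log_Ioi.concaveOn.le_map_sum (fun a _ => ht a) ht1 (fun a _ => hx a)

lemma tendsto_zero_of_le_sub_succ {u D : ℕ → ℝ} (hu : ∀ N, 0 ≤ u N) (hD : ∀ N, 0 ≤ D N)
    (h : ∀ N, u N ≤ D N - D (N + 1)) : Tendsto u atTop (𝓝 0) := by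
  refine (summable_of_sum_range_le (c := D 0) hu fun n => ?_).tendsto_atTop_zero
  calc ∑ i ∈ range n, u i ≤ ∑ i ∈ range n, (D i - D (i + 1)) := sum_le_sum fun i _ => h i
    _ = D 0 - D n := sum_range_sub' D n
    _ ≤ D 0 := sub_le_self _ (hD n)

lemma Set.EqOn.iterate_eq {α : Type*} {f g : α → α} {s : Set α} (hfg : Set.EqOn f g s)
    (hg : Set.MapsTo g s s) {x : α} (hx : x ∈ s) (n : ℕ) : f^[n] x = g^[n] x := by
  induction n with
  | zero => rfl
  | succ n ih =>
    rw [Function.iterate_succ_apply', Function.iterate_succ_apply', ih, hfg (hg.iterate n hx)]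

lemma IsCompact.tendsto_nhds_of_tendsto_comp {X Y α : Type*} [TopologicalSpace X]
    [TopologicalSpace Y] [T2Space Y] {K : Set X} {l : Filter α} {u : α → X} {f : X → Y} {y : X}
    (hK : IsCompact K) (hu : ∀ᶠ a in l, u a ∈ K) (hf : Continuous f)
    (hy : ∀ x ∈ K, f x = f y → x = y) (hfu : Tendsto (f ∘ u) l (𝓝 (f y))) :
    Tendsto u l (𝓝 y) := by
  refine hK.tendsto_nhds_of_unique_mapClusterPt hu fun x hx hux => hy x hx ?_
  by_contra hne
  exact ((hux.continuousAt_comp hf.continuousAt).clusterPt.mono hfu).ne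
    (disjoint_nhds_nhds.2 hne).eq_bot

def openSimplex (ι : Type*) [Fintype ι] : Set (ι → ℝ) := {p | (∀ i, 0 < p i) ∧ ∑ i, p i = 1}

lemma openSimplex_subset_stdSimplex {ι : Type*} [Fintype ι] :
    openSimplex ι ⊆ stdSimplex ℝ ι :=
  fun _ hp => ⟨fun i => (hp.1 i).le, hp.2⟩

namespace LinearEM

variable {ι κ : Type*}

structure Admissible (A : Matrix κ ι ℝ) (c : κ → ℕ) : Prop where
  nonneg : ∀ a j, 0 ≤ A a j
  exists_pos_of_row : ∀ a, ∃ j, 0 < A a j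
  exists_pos_of_col : ∀ j, ∃ a, c a ≠ 0 ∧ 0 < A a j

variable [Fintype ι]

lemma sum_mul_div_mulVec {A : Matrix κ ι ℝ} {p : ι → ℝ} (hp : ∀ j, p j ≠ 0) (q : ι → ℝ)
    (a : κ) : ∑ j, A a j * p j / (A *ᵥ p) a * (q j / p j) = (A *ᵥ q) a / (A *ᵥ p) a := by
  have hterm : ∀ j, A a j * p j / (A *ᵥ p) a * (q j / p j) = A a j * q j / (A *ᵥ p) a := by
    intro j
    field_simp [hp j]
  simp_rw [hterm, ← sum_div]
  rfl

lemma sum_mul_div_mulVec_self {A : Matrix κ ι ℝ} {p : ι → ℝ} {a : κ} (hAp : (A *ᵥ p) a ≠ 0) :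
    ∑ j, A a j * p j / (A *ᵥ p) a = 1 := by
  rw [← sum_div]
  exact div_self hAp

lemma Admissible.mulVec_pos {A : Matrix κ ι ℝ} {c : κ → ℕ} (hAc : Admissible A c) {p : ι → ℝ}
    (hp : ∀ j, 0 < p j) (a : κ) : 0 < (A *ᵥ p) a :=
  have ⟨j, hj⟩ := hAc.exists_pos_of_row a
  sum_pos' (fun i _ => mul_nonneg (hAc.nonneg a i) (hp i).le) ⟨j, mem_univ j, mul_pos hj (hp j)⟩

lemma mulVec_nonneg {A : Matrix κ ι ℝ} (hA : ∀ a j, 0 ≤ A a j) {v : ι → ℝ} (hv : ∀ j, 0 ≤ v j)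
    (a : κ) : 0 ≤ (A *ᵥ v) a :=
  sum_nonneg fun j _ => mul_nonneg (hA a j) (hv j)

variable [Fintype κ]

def likelihood (A : Matrix κ ι ℝ) (c : κ → ℕ) (p : ι → ℝ) : ℝ := ∏ a, (A *ᵥ p) a ^ c a

noncomputable def emMap (A : Matrix κ ι ℝ) (c : κ → ℕ) (p : ι → ℝ) (j : ι) : ℝ :=
  (∑ a, (c a : ℝ))⁻¹ * (p j * ∑ a, c a * A a j / (A *ᵥ p) a)

variable {A : Matrix κ ι ℝ} {c : κ → ℕ}

lemma continuous_likelihood : Continuous (likelihood A c) := by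
  unfold likelihood
  fun_prop

lemma log_likelihood {p : ι → ℝ} (hAp : ∀ a, 0 < (A *ᵥ p) a) :
    log (likelihood A c p) = ∑ a, c a * log ((A *ᵥ p) a) := by
  rw [likelihood, log_prod fun a _ => (pow_pos (hAp a) _).ne']
  simp_rw [log_pow]

lemma likelihood_mul_lt_sq_midpoint (hA : ∀ a j, 0 ≤ A a j) {q q' : ι → ℝ}
    (hq : ∀ j, 0 ≤ q j) (hq' : ∀ j, 0 ≤ q' j) (hpos : 0 < likelihood A c q * likelihood A c q')
    {a₀ : κ} (ha₀ : c a₀ ≠ 0) (hne : (A *ᵥ q) a₀ ≠ (A *ᵥ q') a₀) :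
    likelihood A c q * likelihood A c q'
      < likelihood A c ((2⁻¹ : ℝ) • q + (2⁻¹ : ℝ) • q') ^ 2 := by
  have hmid : ∀ a, (A *ᵥ ((2⁻¹ : ℝ) • q + (2⁻¹ : ℝ) • q')) a
      = 2⁻¹ * (A *ᵥ q) a + 2⁻¹ * (A *ᵥ q') a := fun a => by
    simp only [mulVec_add, mulVec_smul, Pi.add_apply, Pi.smul_apply, smul_eq_mul]
  have hfac : ∀ a, (A *ᵥ q) a ^ c a * (A *ᵥ q') a ^ c a
      = ((A *ᵥ q) a * (A *ᵥ q') a) ^ c a := fun a => (mul_pow _ _ _).symm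
  have hsq : ∀ a, ((A *ᵥ ((2⁻¹ : ℝ) • q + (2⁻¹ : ℝ) • q')) a ^ c a) ^ 2
      = ((2⁻¹ * (A *ᵥ q) a + 2⁻¹ * (A *ᵥ q') a) ^ 2) ^ c a := fun a => by
    rw [hmid, ← pow_mul, ← pow_mul, mul_comm (c a)]
  have hnn : ∀ a, 0 ≤ (A *ᵥ q) a * (A *ᵥ q') a := fun a =>
    mul_nonneg (mulVec_nonneg hA hq a) (mulVec_nonneg hA hq' a)
  rw [likelihood, likelihood, ← prod_mul_distrib] at hpos ⊢
  rw [likelihood, ← prod_pow]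
  simp_rw [hfac, hsq] at hpos ⊢
  refine prod_lt_prod (fun a _ => ?_) (fun a _ => ?_) ⟨a₀, mem_univ a₀, ?_⟩
  · exact (pow_nonneg (hnn a) _).lt_of_ne' (prod_ne_zero_iff.1 hpos.ne' a (mem_univ a))
  · exact pow_le_pow_left₀ (hnn a) (by nlinarith [sq_nonneg ((A *ᵥ q) a - (A *ᵥ q') a)]) _
  · refine pow_lt_pow_left₀ ?_ (hnn a₀) ha₀
    nlinarith [sq_pos_of_ne_zero (sub_ne_zero.2 hne)]

lemma eq_of_likelihood_eq_of_isMaxOn (hA : ∀ a j, 0 ≤ A a j)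
    (hident : ∀ q ∈ stdSimplex ℝ ι, ∀ q' ∈ stdSimplex ℝ ι,
      (∀ a, c a ≠ 0 → (A *ᵥ q) a = (A *ᵥ q') a) → q = q')
    {p q : ι → ℝ} (hmax : IsMaxOn (likelihood A c) (stdSimplex ℝ ι) p) (hp : p ∈ stdSimplex ℝ ι)
    (hLp : 0 < likelihood A c p) (hq : q ∈ stdSimplex ℝ ι)
    (hLq : likelihood A c q = likelihood A c p) : q = p := by
  by_contra hne
  obtain ⟨a₀, ha₀, hne₀⟩ : ∃ a, c a ≠ 0 ∧ (A *ᵥ q) a ≠ (A *ᵥ p) a := by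
    by_contra! h
    exact hne (hident q hq p hp h)
  have hr : (2⁻¹ : ℝ) • q + (2⁻¹ : ℝ) • p ∈ stdSimplex ℝ ι :=
    convex_stdSimplex ℝ ι hq hp (by norm_num) (by norm_num) (by norm_num)
  have hlt := likelihood_mul_lt_sq_midpoint hA hq.1 hp.1 (by rw [hLq]; positivity) ha₀ hne₀
  have hle := pow_le_pow_left₀ (prod_nonneg fun a _ => pow_nonneg (mulVec_nonneg hA hr.1 a) _)
    (hmax hr) 2
  rw [hLq, ← sq] at hlt
  exact hlt.not_ge hle

lemma mul_emMap {p : ι → ℝ} (hc : ∑ a, (c a : ℝ) ≠ 0) (j : ι) :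
    (∑ a, (c a : ℝ)) * emMap A c p j = ∑ a, c a * (A a j * p j / (A *ᵥ p) a) := by
  rw [emMap, mul_inv_cancel_left₀ hc, mul_sum]
  exact sum_congr rfl fun a _ => by ring

lemma emMap_eq_mul_sum (p : ι → ℝ) (j : ι) :
    emMap A c p j = p j * ∑ a, c a * A a j / ((∑ b, (c b : ℝ)) * (A *ᵥ p) a) := by
  simp only [emMap, mul_sum]
  exact sum_congr rfl fun a _ => by ring

namespace Admissible

lemma likelihood_pos (hAc : Admissible A c) {p : ι → ℝ} (hp : ∀ j, 0 < p j) :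
    0 < likelihood A c p :=
  prod_pos fun a _ => pow_pos (hAc.mulVec_pos hp a) _

lemma sum_cast_pos (hAc : Admissible A c) {p : ι → ℝ} (hp : p ∈ openSimplex ι) :
    0 < ∑ a, (c a : ℝ) := by
  obtain ⟨j, -, -⟩ := exists_ne_zero_of_sum_ne_zero (hp.2 ▸ one_ne_zero : ∑ i, p i ≠ 0)
  obtain ⟨a, hca, -⟩ := hAc.exists_pos_of_col j
  exact sum_pos' (fun b _ => Nat.cast_nonneg _)
    ⟨a, mem_univ a, Nat.cast_pos.2 (Nat.pos_of_ne_zero hca)⟩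

lemma mapsTo_emMap (hAc : Admissible A c) :
    Set.MapsTo (emMap A c) (openSimplex ι) (openSimplex ι) := by
  intro p hp
  have hM := hAc.sum_cast_pos hp
  have hAp := hAc.mulVec_pos hp.1
  refine ⟨fun j => ?_, ?_⟩
  · obtain ⟨a, hca, hAaj⟩ := hAc.exists_pos_of_col j
    refine mul_pos (inv_pos.2 hM) (mul_pos (hp.1 j) (sum_pos' (fun b _ => ?_) ⟨a, mem_univ a, ?_⟩))
    · exact div_nonneg (mul_nonneg (Nat.cast_nonneg _) (hAc.nonneg b j)) (hAp b).le
    · exact div_pos (mul_pos (Nat.cast_pos.2 (Nat.pos_of_ne_zero hca)) hAaj) (hAp a)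
  · refine mul_left_cancel₀ hM.ne' ?_
    rw [mul_sum, mul_one]
    simp_rw [mul_emMap hM.ne']
    rw [sum_comm]
    simp_rw [← mul_sum, sum_mul_div_mulVec_self (hAp _).ne', mul_one]

lemma log_likelihood_add_mul_relEntropy_le (hAc : Admissible A c) {p : ι → ℝ}
    (hp : p ∈ openSimplex ι) :
    log (likelihood A c p) + (∑ a, (c a : ℝ)) * relEntropy (emMap A c p) p
      ≤ log (likelihood A c (emMap A c p)) := by
  have hTp := hAc.mapsTo_emMap hp
  have hM := hAc.sum_cast_pos hp
  have hAp := hAc.mulVec_pos hp.1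
  have hATp := hAc.mulVec_pos hTp.1
  -- `r a` is the posterior law of the latent coordinate given an observation of type `a`.
  set r : κ → ι → ℝ := fun a j => A a j * p j / (A *ᵥ p) a
  have jensen : ∀ a, ∑ j, r a j * log (emMap A c p j / p j)
      ≤ log ((A *ᵥ emMap A c p) a / (A *ᵥ p) a) := fun a => by
    rw [← sum_mul_div_mulVec (fun j => (hp.1 j).ne')]
    exact sum_mul_log_le_log_sum_mul
      (fun j => div_nonneg (mul_nonneg (hAc.nonneg a j) (hp.1 j).le) (hAp a).le)
      (sum_mul_div_mulVec_self (hAp a).ne') fun j => div_pos (hTp.1 j) (hp.1 j)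
  calc log (likelihood A c p) + (∑ a, (c a : ℝ)) * relEntropy (emMap A c p) p
      = log (likelihood A c p) + ∑ a, c a * ∑ j, r a j * log (emMap A c p j / p j) := by
        simp_rw [relEntropy, mul_sum, ← mul_assoc, mul_emMap hM.ne', sum_mul]
        rw [sum_comm]
    _ ≤ log (likelihood A c p) + ∑ a, c a * log ((A *ᵥ emMap A c p) a / (A *ᵥ p) a) := by
        gcongr with a
        exact jensen a
    _ = log (likelihood A c (emMap A c p)) := by
        simp_rw [log_likelihood hAp, log_likelihood hATp, log_div (hATp _).ne' (hAp _).ne',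
          mul_sub, sum_sub_distrib]
        ring

lemma emMap_eq_self_of_isMaxOn (hAc : Admissible A c) {p : ι → ℝ}
    (hmax : IsMaxOn (likelihood A c) (stdSimplex ℝ ι) p) (hp : p ∈ openSimplex ι) :
    emMap A c p = p := by
  have hTp := hAc.mapsTo_emMap hp
  refine eq_of_relEntropy_nonpos (fun j => (hTp.1 j).le) hp.1 (hTp.2.trans hp.2.symm) ?_
  have hle : log (likelihood A c (emMap A c p)) ≤ log (likelihood A c p) :=
    log_le_log (hAc.likelihood_pos hTp.1) (hmax (openSimplex_subset_stdSimplex hTp))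
  refine nonpos_of_mul_nonpos_right ?_ (hAc.sum_cast_pos hp)
  linarith [hAc.log_likelihood_add_mul_relEntropy_le hp]

lemma log_likelihood_sub_le (hAc : Admissible A c) {pstar p : ι → ℝ}
    (hfix : emMap A c pstar = pstar) (hpstar : pstar ∈ openSimplex ι) (hp : p ∈ openSimplex ι) :
    log (likelihood A c pstar) - log (likelihood A c p)
      ≤ (∑ a, (c a : ℝ)) * (relEntropy pstar p - relEntropy pstar (emMap A c p)) := by
  have hM := hAc.sum_cast_pos hp
  have hAs := hAc.mulVec_pos hpstar.1
  have hAp := hAc.mulVec_pos hp.1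
  have hTp := hAc.mapsTo_emMap hp
  -- Since `pstar` is fixed, the weights `t · j` sum to one, and they average the ratios
  -- `(A *ᵥ pstar) a / (A *ᵥ p) a` to `emMap A c p j / p j`.
  set t : κ → ι → ℝ := fun a j => c a * A a j / ((∑ b, (c b : ℝ)) * (A *ᵥ pstar) a)
  have ht : ∀ a j, 0 ≤ t a j := fun a j =>
    div_nonneg (mul_nonneg (Nat.cast_nonneg _) (hAc.nonneg a j)) (mul_pos hM (hAs a)).le
  have ht1 : ∀ j, ∑ a, t a j = 1 := fun j => by
    have hj := congrFun hfix j
    rw [emMap_eq_mul_sum] at hj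
    exact mul_left_cancel₀ (hpstar.1 j).ne' (hj.trans (mul_one _).symm)
  have hratio : ∀ j, ∑ a, t a j * ((A *ᵥ pstar) a / (A *ᵥ p) a) = emMap A c p j / p j := by
    intro j
    rw [emMap_eq_mul_sum, mul_div_cancel_left₀ _ (hp.1 j).ne']
    refine sum_congr rfl fun a _ => ?_
    simp only [t]
    field_simp [(hAs a).ne']
  calc log (likelihood A c pstar) - log (likelihood A c p)
      = ∑ a, c a * log ((A *ᵥ pstar) a / (A *ᵥ p) a) := by
        simp_rw [log_likelihood hAs, log_likelihood hAp, log_div (hAs _).ne' (hAp _).ne', mul_sub,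
          sum_sub_distrib]
    _ = (∑ b, (c b : ℝ)) * ∑ j, pstar j * ∑ a, t a j * log ((A *ᵥ pstar) a / (A *ᵥ p) a) := by
        simp_rw [mul_sum]
        rw [sum_comm]
        refine sum_congr rfl fun a _ => ?_
        rw [← mul_one (_ * log _), ← sum_mul_div_mulVec_self (hAs a).ne', mul_sum]
        refine sum_congr rfl fun j _ => ?_
        simp only [t]
        field_simp [hM.ne', (hAs a).ne']
    _ ≤ (∑ b, (c b : ℝ)) * ∑ j, pstar j * log (emMap A c p j / p j) := by
        gcongr with j
        · exact (hpstar.1 j).le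
        rw [← hratio]
        exact sum_mul_log_le_log_sum_mul (fun a => ht a j) (ht1 j) fun a =>
          div_pos (hAs a) (hAp a)
    _ = (∑ b, (c b : ℝ)) * (relEntropy pstar p - relEntropy pstar (emMap A c p)) := by
        rw [relEntropy, relEntropy, ← sum_sub_distrib]
        refine congrArg _ (sum_congr rfl fun j _ => ?_)
        rw [log_div (hTp.1 j).ne' (hp.1 j).ne', log_div (hpstar.1 j).ne' (hp.1 j).ne',
          log_div (hpstar.1 j).ne' (hTp.1 j).ne']
        ring

end Admissible

lemma Admissible.tendsto_likelihood_emMap_iterate (hAc : Admissible A c) {pstar : ι → ℝ}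
    (hmax : IsMaxOn (likelihood A c) (stdSimplex ℝ ι) pstar) (hpstar : pstar ∈ openSimplex ι)
    {p₀ : ι → ℝ} (hp₀ : p₀ ∈ openSimplex ι) :
    Tendsto (fun N => likelihood A c ((emMap A c)^[N] p₀)) atTop (𝓝 (likelihood A c pstar)) := by
  set p : ℕ → ι → ℝ := fun N => (emMap A c)^[N] p₀
  have hp : ∀ N, p N ∈ openSimplex ι := fun N => hAc.mapsTo_emMap.iterate N hp₀
  have hgap : Tendsto (fun N => log (likelihood A c pstar) - log (likelihood A c (p N)))
      atTop (𝓝 0) := by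
    refine tendsto_zero_of_le_sub_succ
      (D := fun N => (∑ a, (c a : ℝ)) * relEntropy pstar (p N))
      (fun N => sub_nonneg.2 (log_le_log (hAc.likelihood_pos (hp N).1)
        (hmax (openSimplex_subset_stdSimplex (hp N)))))
      (fun N => mul_nonneg (hAc.sum_cast_pos hp₀).le (relEntropy_nonneg
        (fun j => (hpstar.1 j).le) (hp N).1 (hpstar.2.trans (hp N).2.symm)))
      fun N => ?_
    rw [← mul_sub, show p (N + 1) = emMap A c (p N) from Function.iterate_succ_apply' _ _ _]
    exact hAc.log_likelihood_sub_le (hAc.emMap_eq_self_of_isMaxOn hmax hpstar) hpstar (hp N)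
  have hexp := (continuous_exp.tendsto _).comp
    ((tendsto_const_nhds (x := log (likelihood A c pstar))).sub hgap)
  rw [sub_zero, exp_log (hAc.likelihood_pos hpstar.1)] at hexp
  refine hexp.congr fun N => ?_
  rw [Function.comp_apply, sub_sub_cancel, exp_log (hAc.likelihood_pos (hp N).1)]

theorem tendsto_emMap_iterate (hAc : Admissible A c)
    (hident : ∀ q ∈ stdSimplex ℝ ι, ∀ q' ∈ stdSimplex ℝ ι,
      (∀ a, c a ≠ 0 → (A *ᵥ q) a = (A *ᵥ q') a) → q = q')
    {pstar : ι → ℝ} (hmax : IsMaxOn (likelihood A c) (stdSimplex ℝ ι) pstar)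
    (hpstar : pstar ∈ openSimplex ι) {p₀ : ι → ℝ} (hp₀ : p₀ ∈ openSimplex ι) :
    Tendsto (fun N => (emMap A c)^[N] p₀) atTop (𝓝 pstar) :=
  (isCompact_stdSimplex ℝ ι).tendsto_nhds_of_tendsto_comp
    (Eventually.of_forall fun N => openSimplex_subset_stdSimplex (hAc.mapsTo_emMap.iterate N hp₀))
    continuous_likelihood
    (fun _ hq hLq => eq_of_likelihood_eq_of_isMaxOn hAc.nonneg hident hmax
      (openSimplex_subset_stdSimplex hpstar) (hAc.likelihood_pos hpstar.1) hq hLq)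
    (hAc.tendsto_likelihood_emMap_iterate hmax hpstar hp₀)

end LinearEM

section Censoring

variable {ι : Type*} [LinearOrder ι]

/-- Row `inl k` gives the factor `p k` of the likelihood, row `inr k` the factor
`∑_{l ≥ k} p l / w l`. -/
noncomputable def censoringMatrix (w : ι → ℝ) : Matrix (ι ⊕ ι) ι ℝ :=
  fromRows 1 (of fun k i => if k ≤ i then (w i)⁻¹ else 0)

@[simp]
lemma censoringMatrix_inl (w : ι → ℝ) (k i : ι) :
    censoringMatrix w (Sum.inl k) i = if k = i then 1 else 0 := by
  simp [censoringMatrix, one_apply]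

@[simp]
lemma censoringMatrix_inr (w : ι → ℝ) (k i : ι) :
    censoringMatrix w (Sum.inr k) i = if k ≤ i then (w i)⁻¹ else 0 := by
  simp [censoringMatrix]

lemma admissible_censoringMatrix {w : ι → ℝ} (hw : ∀ i, 0 < w i) {ξ ζ : ι → ℕ}
    (hξζ : ∀ j, ξ j ≠ 0 ∨ ζ j ≠ 0) : LinearEM.Admissible (censoringMatrix w) (Sum.elim ξ ζ) where
  nonneg := by
    rintro (k | k) i
    · simp only [censoringMatrix_inl]
      split_ifs <;> norm_num
    · simp only [censoringMatrix_inr]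
      split_ifs
      exacts [(inv_pos.2 (hw i)).le, le_rfl]
  exists_pos_of_row := by
    rintro (k | k)
    exacts [⟨k, by simp⟩, ⟨k, by simp [hw k]⟩]
  exists_pos_of_col j := by
    rcases hξζ j with hξ | hζ
    exacts [⟨Sum.inl j, hξ, by simp⟩, ⟨Sum.inr j, hζ, by simp [hw j]⟩]

variable [Fintype ι]

@[simp]
lemma censoringMatrix_mulVec_inl (w p : ι → ℝ) (k : ι) :
    (censoringMatrix w *ᵥ p) (Sum.inl k) = p k := by
  simp [mulVec, dotProduct, ite_mul]

lemma censoringMatrix_mulVec_inr (w p : ι → ℝ) (k : ι) :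
    (censoringMatrix w *ᵥ p) (Sum.inr k) = ∑ l ∈ univ.filter (fun l => k ≤ l), (w l)⁻¹ * p l := by
  simp [mulVec, dotProduct, ite_mul, sum_filter]

lemma eq_of_censoringMatrix_mulVec_eq {w : ι → ℝ} (hw : ∀ i, w i ≠ 0) {ξ ζ : ι → ℕ}
    (hξζ : ∀ j, ξ j ≠ 0 ∨ ζ j ≠ 0) {q q' : ι → ℝ}
    (h : ∀ a, Sum.elim ξ ζ a ≠ 0 → (censoringMatrix w *ᵥ q) a = (censoringMatrix w *ᵥ q') a) :
    q = q' := by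
  funext j
  induction j using WellFoundedGT.induction with
  | _ j ih =>
  rcases hξζ j with hξ | hζ
  · simpa using h (Sum.inl j) hξ
  · have hj := h (Sum.inr j) hζ
    rw [censoringMatrix_mulVec_inr, censoringMatrix_mulVec_inr, ← sub_eq_zero, ← sum_sub_distrib,
      sum_eq_single j (fun l hl hlj => ?_) (by simp), ← mul_sub] at hj
    · exact sub_eq_zero.1 ((mul_eq_zero.1 hj).resolve_left (inv_ne_zero (hw j)))
    · rw [ih l (lt_of_le_of_ne (mem_filter.1 hl).2 (Ne.symm hlj)), sub_self]

lemma likelihood_censoringMatrix (w p : ι → ℝ) (ξ ζ : ι → ℕ) :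
    LinearEM.likelihood (censoringMatrix w) (Sum.elim ξ ζ) p
      = ∏ j, p j ^ ξ j * (∑ k ∈ univ.filter (fun k => j ≤ k), p k / w k) ^ ζ j := by
  simp_rw [LinearEM.likelihood, Fintype.prod_sum_type, ← prod_mul_distrib, Sum.elim_inl,
    Sum.elim_inr, censoringMatrix_mulVec_inl, censoringMatrix_mulVec_inr, div_eq_inv_mul]

lemma emMap_censoringMatrix {w p : ι → ℝ} (hp : ∀ j, p j ≠ 0) (ξ ζ : ι → ℕ) (j : ι) :
    LinearEM.emMap (censoringMatrix w) (Sum.elim ξ ζ) p j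
      = ((∑ k, ξ k + ∑ k, ζ k : ℕ) : ℝ)⁻¹ * ((ξ j : ℝ) + (w j)⁻¹ * p j *
          ∑ k ∈ univ.filter (fun k => k ≤ j),
            (ζ k : ℝ) / ∑ l ∈ univ.filter (fun l => k ≤ l), (w l)⁻¹ * p l) := by
  rw [LinearEM.emMap, Fintype.sum_sum_type, Fintype.sum_sum_type, sum_filter, mul_sum]
  simp only [Sum.elim_inl, Sum.elim_inr, censoringMatrix_inl, censoringMatrix_inr,
    censoringMatrix_mulVec_inl, censoringMatrix_mulVec_inr, mul_ite, mul_one, mul_zero, ite_div,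
    zero_div, sum_ite_eq', mem_univ, if_true, Nat.cast_add, Nat.cast_sum, mul_add, mul_sum]
  congr 1
  · field_simp [hp j]
  · refine sum_congr rfl fun k _ => ?_
    split_ifs <;> ring

end Censoring

theorem stmt6_general (h : ℕ) (w : Fin h → ℝ) (hw : ∀ j, 0 < w j)
    (ξ ζ : Fin h → ℕ) (hξζ : ∀ j, 1 ≤ ξ j + ζ j)
    (m n : ℕ) (hm : m = ∑ j, ξ j) (hn : n = ∑ j, ζ j)
    (L : (Fin h → ℝ) → ℝ)
    (hL : ∀ p, L p = ∏ j, p j ^ ξ j *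
      (∑ k ∈ Finset.univ.filter (fun k => j ≤ k), p k / w k) ^ ζ j)
    (T : (Fin h → ℝ) → (Fin h → ℝ))
    (hT : ∀ p : Fin h → ℝ, ((∀ j, 0 < p j) ∧ ∑ j, p j = 1) → ∀ j,
      T p j = (↑(m + n) : ℝ)⁻¹ *
        ((ξ j : ℝ) + (w j)⁻¹ * p j *
          ∑ k ∈ Finset.univ.filter (fun k => k ≤ j),
            (ζ k : ℝ) / (∑ l ∈ Finset.univ.filter (fun l => k ≤ l), (w l)⁻¹ * p l)))
    (pstar : Fin h → ℝ) (hpstarΔ : (∀ j, 0 ≤ pstar j) ∧ ∑ j, pstar j = 1)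
    (hpstarMax : ∀ q : Fin h → ℝ, ((∀ j, 0 ≤ q j) ∧ ∑ j, q j = 1) → L q ≤ L pstar)
    (hpstarPos : ∀ j, 0 < pstar j)
    (p₀ : Fin h → ℝ) (hp₀ : (∀ j, 0 < p₀ j) ∧ ∑ j, p₀ j = 1) :
    Tendsto (fun N : ℕ => T^[N] p₀) atTop (nhds pstar) := by
  subst hm hn
  have hξζ' : ∀ j, ξ j ≠ 0 ∨ ζ j ≠ 0 := fun j => by have := hξζ j; omega
  have hAc := admissible_censoringMatrix hw hξζ'
  have hLA : L = LinearEM.likelihood (censoringMatrix w) (Sum.elim ξ ζ) :=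
    funext fun p => by rw [hL, likelihood_censoringMatrix]
  have hTA : Set.EqOn T (LinearEM.emMap (censoringMatrix w) (Sum.elim ξ ζ)) (openSimplex (Fin h)) :=
    fun p hp => funext fun j => by rw [hT p hp j, emMap_censoringMatrix fun j => (hp.1 j).ne']
  simp_rw [hTA.iterate_eq hAc.mapsTo_emMap hp₀]
  exact LinearEM.tendsto_emMap_iterate hAc
    (fun q _ q' _ => eq_of_censoringMatrix_mulVec_eq (fun i => (hw i).ne') hξζ')
    (isMaxOn_iff.2 fun q hq => hLA ▸ hpstarMax q hq) ⟨hpstarPos, hpstarΔ.2⟩ hp₀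

/-- If the maximizer `p*` of the likelihood `L` over the simplex `Δ` has all
coordinates positive, then for every starting point `p₀ ∈ Δ°` the EM iterates
`p_{N+1} = T(p_N)` converge to `p*` as `N → ∞`. -/
theorem stmt6 (h : ℕ) (hh : 1 ≤ h) (w : Fin h → ℝ) (hw : ∀ j, 0 < w j)
    (ξ ζ : Fin h → ℕ) (hξζ : ∀ j, 1 ≤ ξ j + ζ j)
    (m n : ℕ) (hm : m = ∑ j, ξ j) (hn : n = ∑ j, ζ j)
    (L : (Fin h → ℝ) → ℝ)
    (hL : ∀ p, L p = ∏ j, p j ^ ξ j *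
      (∑ k ∈ Finset.univ.filter (fun k => j ≤ k), p k / w k) ^ ζ j)
    (T : (Fin h → ℝ) → (Fin h → ℝ))
    (hT : ∀ p : Fin h → ℝ, ((∀ j, 0 < p j) ∧ ∑ j, p j = 1) → ∀ j,
      T p j = (↑(m + n) : ℝ)⁻¹ *
        ((ξ j : ℝ) + (w j)⁻¹ * p j *
          ∑ k ∈ Finset.univ.filter (fun k => k ≤ j),
            (ζ k : ℝ) / (∑ l ∈ Finset.univ.filter (fun l => k ≤ l), (w l)⁻¹ * p l)))
    (pstar : Fin h → ℝ) (hpstarΔ : (∀ j, 0 ≤ pstar j) ∧ ∑ j, pstar j = 1)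
    (hpstarMax : ∀ q : Fin h → ℝ, ((∀ j, 0 ≤ q j) ∧ ∑ j, q j = 1) → L q ≤ L pstar)
    (hpstarPos : ∀ j, 0 < pstar j)
    (p₀ : Fin h → ℝ) (hp₀ : (∀ j, 0 < p₀ j) ∧ ∑ j, p₀ j = 1) :
    Tendsto (fun N : ℕ => T^[N] p₀) atTop (nhds pstar) :=
  stmt6_general h w hw ξ ζ hξζ m n hm hn L hL T hT pstar hpstarΔ hpstarMax hpstarPos p₀ hp₀
end

section
/- For every Borel probability measure G on (0,∞), there exists a Borel probability measure G' supported on the finite set {x_1, ..., x_m, W^{-1}(y_1), ..., W^{-1}(y_n)} such that L(G') ≥ L(G). -/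
open MeasureTheory Finset

/-!
Push `G` forward along the map `T` sending `v` to the largest point of
`S = {x_1, …, x_m, W⁻¹(y_1), …, W⁻¹(y_n)}` below `v`. Each `x_i` is fixed by `T`, so its mass
can only grow. The set `{v > 0 : W v ≥ y_j}` is the ray `[W⁻¹(y_j), ∞)`, which `T` maps into
itself while moving points to the left; as `1/W` is nonincreasing there, the integral of `1/W`
over the ray can only grow as well.
-/

namespace Finset

variable {α : Type*} [LinearOrder α] (s : Finset α) (hs : s.Nonempty)

noncomputable def floorOrMin (v : α) : α :=
  if h : (s.filter (· ≤ v)).Nonempty then (s.filter (· ≤ v)).max' h else s.min' hs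

theorem floorOrMin_mem (v : α) : s.floorOrMin hs v ∈ s := by
  unfold floorOrMin
  split_ifs with h
  · exact filter_subset _ _ ((s.filter (· ≤ v)).max'_mem h)
  · exact s.min'_mem hs

variable {s hs}

theorem floorOrMin_eq_max' {v : α} (h : (s.filter (· ≤ v)).Nonempty) :
    s.floorOrMin hs v = (s.filter (· ≤ v)).max' h :=
  dif_pos h

theorem le_floorOrMin {a v : α} (ha : a ∈ s) (hav : a ≤ v) : a ≤ s.floorOrMin hs v := by
  have ha' : a ∈ s.filter (· ≤ v) := mem_filter.2 ⟨ha, hav⟩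
  rw [floorOrMin_eq_max' ⟨a, ha'⟩]
  exact le_max' _ _ ha'

theorem floorOrMin_le {a v : α} (ha : a ∈ s) (hav : a ≤ v) : s.floorOrMin hs v ≤ v := by
  have h : (s.filter (· ≤ v)).Nonempty := ⟨a, mem_filter.2 ⟨ha, hav⟩⟩
  rw [floorOrMin_eq_max' h]
  exact (mem_filter.1 (max'_mem _ h)).2

theorem floorOrMin_of_mem {a : α} (ha : a ∈ s) : s.floorOrMin hs a = a :=
  le_antisymm (floorOrMin_le ha le_rfl) (le_floorOrMin ha le_rfl)

theorem monotone_floorOrMin : Monotone (s.floorOrMin hs) := by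
  intro v w hvw
  by_cases hv : (s.filter (· ≤ v)).Nonempty
  · have hmem := mem_filter.1 (max'_mem _ hv)
    rw [floorOrMin_eq_max' hv]
    exact le_floorOrMin hmem.1 (hmem.2.trans hvw)
  · rw [floorOrMin, dif_neg hv]
    exact s.min'_le _ (floorOrMin_mem s hs w)

end Finset

theorem measure_le_map_apply_of_mapsTo {α : Type*} [MeasurableSpace α] {μ : Measure α}
    {T : α → α} (hT : Measurable T) {s : Set α} (hTs : Set.MapsTo T s s) :
    μ s ≤ μ.map T s :=
  (measure_mono hTs).trans (Measure.le_map_apply hT.aemeasurable s)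

theorem setLIntegral_le_setLIntegral_map {α : Type*} [MeasurableSpace α] {μ : Measure α}
    {T : α → α} (hT : Measurable T) {s : Set α} (hs : MeasurableSet s) {f : α → ENNReal}
    (hf : AEMeasurable f ((μ.map T).restrict s)) (hTs : Set.MapsTo T s s)
    (hfT : ∀ v ∈ s, f v ≤ f (T v)) :
    ∫⁻ v in s, f v ∂μ ≤ ∫⁻ v in s, f v ∂μ.map T := by
  rw [Measure.restrict_map hT hs] at hf ⊢
  calc ∫⁻ v in s, f v ∂μ
      ≤ ∫⁻ v in s, f (T v) ∂μ := setLIntegral_mono' hs hfT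
    _ ≤ ∫⁻ v in T ⁻¹' s, f (T v) ∂μ := lintegral_mono_set hTs
    _ = ∫⁻ v, f v ∂(μ.restrict (T ⁻¹' s)).map T := (lintegral_map' hf hT.aemeasurable).symm

theorem setOf_pos_and_le_eq_Ici {W : ℝ → ℝ} (hW : MonotoneOn W (Set.Ioi 0)) {y c : ℝ}
    (hc : IsLeast {v : ℝ | 0 < v ∧ y ≤ W v} c) :
    {v : ℝ | 0 < v ∧ y ≤ W v} = Set.Ici c := by
  refine Set.Subset.antisymm (fun v hv => hc.2 hv) fun v (hcv : c ≤ v) => ?_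
  have hv : 0 < v := hc.1.1.trans_le hcv
  exact ⟨hv, hc.1.2.trans (hW hc.1.1 hv hcv)⟩

theorem antitoneOn_ofReal_inv {W : ℝ → ℝ} (hWpos : ∀ v, 0 < v → 0 < W v)
    (hW : MonotoneOn W (Set.Ioi 0)) :
    AntitoneOn (fun v => ENNReal.ofReal (W v)⁻¹) (Set.Ioi 0) :=
  fun _ hv _ hw hvw => ENNReal.ofReal_le_ofReal (inv_anti₀ (hWpos _ hv) (hW hv hw hvw))

theorem stmt11_general (W : ℝ → ℝ) (hWpos : ∀ v : ℝ, 0 < v → 0 < W v)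
    (hWmono : MonotoneOn W (Set.Ioi 0))
    (m n : ℕ) (hmn : 1 ≤ m + n)
    (x : Fin m → ℝ) (y : Fin n → ℝ)
    (Winv : Fin n → ℝ)
    (hWinv : ∀ j, IsLeast {v : ℝ | 0 < v ∧ y j ≤ W v} (Winv j))
    (G : Measure ℝ) [IsProbabilityMeasure G] :
    ∃ G' : Measure ℝ, IsProbabilityMeasure G' ∧
      G' ((Set.range x ∪ Set.range Winv)ᶜ) = 0 ∧
      (∏ i, G {x i}) *
          (∏ j, ∫⁻ v in {v : ℝ | 0 < v ∧ y j ≤ W v}, ENNReal.ofReal (W v)⁻¹ ∂G)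
        ≤ (∏ i, G' {x i}) *
          (∏ j, ∫⁻ v in {v : ℝ | 0 < v ∧ y j ≤ W v}, ENNReal.ofReal (W v)⁻¹ ∂G') := by
  have hfin := (Set.finite_range x).union (Set.finite_range Winv)
  have hS : hfin.toFinset.Nonempty := by
    rw [Set.Finite.toFinset_nonempty]
    rcases Nat.eq_zero_or_pos m with hm | hm
    · exact ⟨Winv ⟨0, by omega⟩, .inr ⟨_, rfl⟩⟩
    · exact ⟨x ⟨0, hm⟩, .inl ⟨_, rfl⟩⟩
  set T := hfin.toFinset.floorOrMin hS
  have hT : Measurable T := monotone_floorOrMin.measurable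
  have hTS : ∀ v, T v ∈ Set.range x ∪ Set.range Winv := fun v =>
    hfin.mem_toFinset.1 (floorOrMin_mem _ hS v)
  refine ⟨G.map T, Measure.isProbabilityMeasure_map hT.aemeasurable, ?_, ?_⟩
  · rw [Measure.map_apply hT hfin.measurableSet.compl, Set.preimage_compl,
      Set.preimage_eq_univ_iff.2 (Set.range_subset_iff.2 hTS), Set.compl_univ, measure_empty]
  refine mul_le_mul' (prod_le_prod' fun i _ => ?_) (prod_le_prod' fun j _ => ?_)
  · refine measure_le_map_apply_of_mapsTo hT fun v (hv : v = x i) => ?_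
    subst hv
    exact floorOrMin_of_mem (hfin.mem_toFinset.2 (.inl ⟨i, rfl⟩))
  · have hc : Winv j ∈ hfin.toFinset := hfin.mem_toFinset.2 (.inr ⟨j, rfl⟩)
    have hanti := (antitoneOn_ofReal_inv hWpos hWmono).mono
      fun v (hv : Winv j ≤ v) => (hWinv j).1.1.trans_le hv
    rw [setOf_pos_and_le_eq_Ici hWmono (hWinv j)]
    refine setLIntegral_le_setLIntegral_map hT measurableSet_Ici
      (aemeasurable_restrict_of_antitoneOn measurableSet_Ici hanti)
      (fun v hv => le_floorOrMin hc hv) fun v hv => ?_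
    exact hanti (le_floorOrMin hc hv) hv (floorOrMin_le hc hv)

/-- For every Borel probability measure `G` on `(0,∞)`, there exists a
Borel probability measure `G'` supported on the finite set
`{x_1, ..., x_m, W⁻¹(y_1), ..., W⁻¹(y_n)}` such that `L(G') ≥ L(G)`, where
`L(G) = ∏_i G({x_i}) · ∏_j ∫_{{v > 0 : W(v) ≥ y_j}} W(v)⁻¹ dG(v)` and
`W⁻¹(y_j) = min{v > 0 : W(v) ≥ y_j}`. -/
theorem stmt11 (W : ℝ → ℝ) (hWpos : ∀ v : ℝ, 0 < v → 0 < W v)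
    (hWmono : MonotoneOn W (Set.Ioi 0))
    (hWrc : ∀ v : ℝ, 0 < v → ContinuousWithinAt W (Set.Ici v) v)
    (m n : ℕ) (hmn : 1 ≤ m + n)
    (x : Fin m → ℝ) (hx : ∀ i, 0 < x i) (y : Fin n → ℝ) (hy : ∀ j, 0 < y j)
    (Winv : Fin n → ℝ)
    (hWinv : ∀ j, IsLeast {v : ℝ | 0 < v ∧ y j ≤ W v} (Winv j))
    (G : Measure ℝ) [IsProbabilityMeasure G] (hG : G (Set.Iic 0) = 0) :
    ∃ G' : Measure ℝ, IsProbabilityMeasure G' ∧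
      G' ((Set.range x ∪ Set.range Winv)ᶜ) = 0 ∧
      (∏ i, G {x i}) *
          (∏ j, ∫⁻ v in {v : ℝ | 0 < v ∧ y j ≤ W v}, ENNReal.ofReal (W v)⁻¹ ∂G)
        ≤ (∏ i, G' {x i}) *
          (∏ j, ∫⁻ v in {v : ℝ | 0 < v ∧ y j ≤ W v}, ENNReal.ofReal (W v)⁻¹ ∂G') :=
  stmt11_general W hWpos hWmono m n hmn x y Winv hWinv G
end

section
/- For every Borel probability measure G on (0,∞) with 0 < μ*(G) < ∞, there exists a Borel probability measure G' supported on the finite set of observed points {x_1, ..., x_m, y_1, ..., y_n}, with 0 < μ*(G') < ∞, such that L(G') ≥ L(G). -/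
/-!
Let `t` be the smallest observed point. If `G` gives no mass to `[t, ∞)`, some factor of `L(G)`
vanishes and a point mass at `t` will do. Otherwise condition `G` on `[t, ∞)` and push it forward
by rounding every `v ≥ t` down to the largest observed point `≤ v`. Up to the common factor
`1 / G[t, ∞)`, this does not decrease the mass of any `{x_i}` or `[y_j, ∞)`, while, `W` being
monotone, it does not increase `μ*`; so every factor of the likelihood grows. A probability measure
on finitely many positive points automatically has `0 < μ* < ∞`.
-/

open MeasureTheory Finset ProbabilityTheory ENNReal

namespace Finset

variable {α : Type*} [LinearOrder α] (S : Finset α) (hS : S.Nonempty)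

def roundDown (v : α) : α :=
  (insert (S.min' hS) (S.filter (· ≤ v))).max' (insert_nonempty _ _)

variable {S hS}

lemma roundDown_mem (v : α) : S.roundDown hS v ∈ S := by
  rcases mem_insert.1 (max'_mem _ (insert_nonempty (S.min' hS) (S.filter (· ≤ v)))) with h | h
  · rw [roundDown, h]
    exact S.min'_mem hS
  · exact (mem_filter.1 h).1

lemma min'_le_roundDown (v : α) : S.min' hS ≤ S.roundDown hS v :=
  le_max' _ _ (mem_insert_self _ _)

lemma roundDown_le {v : α} (hv : S.min' hS ≤ v) : S.roundDown hS v ≤ v :=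
  max'_le _ _ _ fun _ h => (mem_insert.1 h).elim (· ▸ hv) fun h => (mem_filter.1 h).2

lemma le_roundDown {z v : α} (hz : z ∈ S) (hzv : z ≤ v) : z ≤ S.roundDown hS v :=
  le_max' _ _ (mem_insert_of_mem (mem_filter.2 ⟨hz, hzv⟩))

lemma roundDown_of_mem {z : α} (hz : z ∈ S) : S.roundDown hS z = z :=
  (roundDown_le (S.min'_le z hz)).antisymm (le_roundDown hz le_rfl)

lemma monotone_roundDown : Monotone (S.roundDown hS) := fun _ _ hvw =>
  max'_subset _ (insert_subset_insert _ (monotone_filter_right S fun _ _ h => h.trans hvw))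

end Finset

lemma ENNReal.div_le_div_of_mul_le_of_le_mul {a a' b b' k : ℝ≥0∞} (hk0 : k ≠ 0) (hktop : k ≠ ⊤)
    (ha : k * a ≤ a') (hb : b' ≤ k * b) : a / b ≤ a' / b' :=
  calc a / b = k * a / (k * b) := (ENNReal.mul_div_mul_left a b hk0 hktop).symm
    _ ≤ a' / b' := ENNReal.div_le_div ha hb

section

variable {α β : Type*} [MeasurableSpace α] [MeasurableSpace β] {μ : Measure α} {s : Set α}
  {f : α → β}

lemma inv_mul_le_map_cond_apply (hs : MeasurableSet s) (hf : Measurable f) {A : Set α}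
    {B : Set β} (hAB : A ⊆ s ∩ f ⁻¹' B) : (μ s)⁻¹ * μ A ≤ (μ[|s]).map f B :=
  calc (μ s)⁻¹ * μ A ≤ μ[f ⁻¹' B | s] := by rw [cond_apply hs]; gcongr
    _ ≤ (μ[|s]).map f B := Measure.le_map_apply hf.aemeasurable B

lemma lintegral_map_cond_le (hs : MeasurableSet s) {g : β → ℝ≥0∞} {h : α → ℝ≥0∞}
    (hgh : ∀ v ∈ s, g (f v) ≤ h v) :
    ∫⁻ w, g w ∂(μ[|s]).map f ≤ (μ s)⁻¹ * ∫⁻ v in s, h v ∂μ :=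
  calc ∫⁻ w, g w ∂(μ[|s]).map f ≤ ∫⁻ v, g (f v) ∂μ[|s] := lintegral_map_le g f
    _ = (μ s)⁻¹ * ∫⁻ v in s, g (f v) ∂μ := by
      rw [ProbabilityTheory.cond, lintegral_smul_measure, smul_eq_mul]
    _ ≤ (μ s)⁻¹ * ∫⁻ v in s, h v ∂μ := mul_le_mul_right (setLIntegral_mono' hs hgh) _

lemma lintegral_eq_sum_of_measure_compl_eq_zero [MeasurableSingletonClass α] {S : Finset α}
    (hS : μ (↑S)ᶜ = 0) (g : α → ℝ≥0∞) : ∫⁻ v, g v ∂μ = ∑ z ∈ S, g z * μ {z} := by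
  rw [← lintegral_finset, Measure.restrict_eq_self_of_ae_mem (ae_iff.2 hS)]

lemma lintegral_ne_zero_and_ne_top_of_measure_compl_eq_zero [MeasurableSingletonClass α]
    [IsProbabilityMeasure μ] {S : Finset α} (hS : μ (↑S)ᶜ = 0) {g : α → ℝ≥0∞}
    (hg0 : ∀ z ∈ S, g z ≠ 0) (hgtop : ∀ z ∈ S, g z ≠ ⊤) :
    ∫⁻ v, g v ∂μ ≠ 0 ∧ ∫⁻ v, g v ∂μ ≠ ⊤ := by
  rw [lintegral_eq_sum_of_measure_compl_eq_zero hS]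
  refine ⟨fun h => ?_, sum_ne_top.2 fun z hz => mul_ne_top (hgtop z hz) (measure_ne_top _ _)⟩
  have hnull : μ S = 0 := by
    rw [← sum_measure_singleton, sum_eq_zero fun z hz => ?_]
    exact (mul_eq_zero.1 (sum_eq_zero_iff.1 h z hz)).resolve_left (hg0 z hz)
  have := measure_add_measure_compl (μ := μ) S.measurableSet
  simp [hnull, hS] at this

end

section BiasedSampling

/-- `μ*(H)` -/
noncomputable def biasedMean (W : ℝ → ℝ) (H : Measure ℝ) : ℝ≥0∞ :=
  ∫⁻ v in Set.Ioi 0, ENNReal.ofReal (W v) ∂H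

/-- `L(H)` -/
noncomputable def biasedLikelihood {m n : ℕ} (W : ℝ → ℝ) (x : Fin m → ℝ) (y : Fin n → ℝ)
    (H : Measure ℝ) : ℝ≥0∞ :=
  (∏ i, H {x i} / biasedMean W H) * ∏ j, H (Set.Ici (y j)) / biasedMean W H

variable {W : ℝ → ℝ} {m n : ℕ} {x : Fin m → ℝ} {y : Fin n → ℝ}

lemma biasedMean_eq_lintegral_indicator (H : Measure ℝ) :
    biasedMean W H = ∫⁻ v, (Set.Ioi 0).indicator (fun v => ENNReal.ofReal (W v)) v ∂H :=
  (lintegral_indicator measurableSet_Ioi _).symm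

lemma biasedMean_ne_zero_and_ne_top {H : Measure ℝ} [IsProbabilityMeasure H] {S : Finset ℝ}
    (hSpos : ∀ z ∈ S, 0 < z) (hW : ∀ z ∈ S, 0 < W z) (hH : H (↑S)ᶜ = 0) :
    biasedMean W H ≠ 0 ∧ biasedMean W H ≠ ⊤ := by
  rw [biasedMean_eq_lintegral_indicator]
  refine lintegral_ne_zero_and_ne_top_of_measure_compl_eq_zero hH (fun z hz => ?_)
    fun z _ => ((Set.indicator_le_self _ (fun v => ENNReal.ofReal (W v)) z).trans_lt
      ofReal_lt_top).ne
  rw [Set.indicator_of_mem (Set.mem_Ioi.2 (hSpos z hz))]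
  exact (ofReal_pos.2 (hW z hz)).ne'

lemma biasedMean_map_cond_le (hWmono : MonotoneOn W (Set.Ioi 0)) (G : Measure ℝ) {t : ℝ}
    (ht : 0 < t) {τ : ℝ → ℝ} (hτt : ∀ v, t ≤ τ v) (hτle : ∀ v, t ≤ v → τ v ≤ v) :
    biasedMean W ((G[|Set.Ici t]).map τ) ≤ (G (Set.Ici t))⁻¹ * biasedMean W G := by
  rw [biasedMean_eq_lintegral_indicator, biasedMean_eq_lintegral_indicator]
  refine (lintegral_map_cond_le measurableSet_Ici fun v (hv : t ≤ v) => ?_).trans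
    (mul_le_mul_right (setLIntegral_le_lintegral _ _) _)
  rw [Set.indicator_of_mem (Set.mem_Ioi.2 (ht.trans_le (hτt v))),
    Set.indicator_of_mem (Set.mem_Ioi.2 (ht.trans_le hv))]
  exact ofReal_le_ofReal (hWmono (ht.trans_le (hτt v)) (ht.trans_le hv) (hτle v hv))

lemma biasedLikelihood_eq_zero (hmn : 1 ≤ m + n) {H : Measure ℝ} {t : ℝ} (hxt : ∀ i, t ≤ x i)
    (hyt : ∀ j, t ≤ y j) (hH : H (Set.Ici t) = 0) : biasedLikelihood W x y H = 0 := by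
  rcases Nat.eq_zero_or_pos m with rfl | hm
  · refine mul_eq_zero_of_right _ (prod_eq_zero (mem_univ ⟨0, by omega⟩) ?_)
    rw [measure_mono_null (Set.Ici_subset_Ici.2 (hyt _)) hH, ENNReal.zero_div]
  · refine mul_eq_zero_of_left (prod_eq_zero (mem_univ ⟨0, hm⟩) ?_) _
    rw [measure_mono_null (Set.singleton_subset_iff.2 (hxt _)) hH, ENNReal.zero_div]

lemma biasedLikelihood_le_map_cond_roundDown (hWmono : MonotoneOn W (Set.Ioi 0)) (G : Measure ℝ)
    [IsFiniteMeasure G] {S : Finset ℝ} (hS : S.Nonempty) (ht : 0 < S.min' hS)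
    (hxS : ∀ i, x i ∈ S) (hyS : ∀ j, y j ∈ S) (hc : G (Set.Ici (S.min' hS)) ≠ 0) :
    biasedLikelihood W x y G ≤
      biasedLikelihood W x y ((G[|Set.Ici (S.min' hS)]).map (S.roundDown hS)) := by
  have hτ : Measurable (S.roundDown hS) := monotone_roundDown.measurable
  have hk0 : (G (Set.Ici (S.min' hS)))⁻¹ ≠ 0 := ENNReal.inv_ne_zero.2 (measure_ne_top _ _)
  have hktop : (G (Set.Ici (S.min' hS)))⁻¹ ≠ ⊤ := ENNReal.inv_ne_top.2 hc
  have hμ := biasedMean_map_cond_le hWmono G ht min'_le_roundDown fun _ => roundDown_le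
  refine mul_le_mul' (prod_le_prod' fun i _ => ?_) (prod_le_prod' fun j _ => ?_) <;>
    refine ENNReal.div_le_div_of_mul_le_of_le_mul hk0 hktop
      (inv_mul_le_map_cond_apply measurableSet_Ici hτ fun v hv => ?_) hμ
  · rw [Set.mem_singleton_iff.1 hv]
    exact ⟨S.min'_le _ (hxS i), roundDown_of_mem (hxS i)⟩
  · exact ⟨(S.min'_le _ (hyS j)).trans hv, le_roundDown (hyS j) hv⟩

end BiasedSampling

theorem stmt13_general (W : ℝ → ℝ) (hWpos : ∀ v : ℝ, 0 < v → 0 < W v)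
    (hWmono : MonotoneOn W (Set.Ioi 0))
    (m n : ℕ) (hmn : 1 ≤ m + n)
    (x : Fin m → ℝ) (hx : ∀ i, 0 < x i) (y : Fin n → ℝ) (hy : ∀ j, 0 < y j)
    (μstar : Measure ℝ → ENNReal)
    (hμstar : ∀ H : Measure ℝ, μstar H = ∫⁻ v in Set.Ioi (0 : ℝ), ENNReal.ofReal (W v) ∂H)
    (L : Measure ℝ → ENNReal)
    (hL : ∀ H : Measure ℝ,
      L H = (∏ i, H {x i} / μstar H) * ∏ j, H (Set.Ici (y j)) / μstar H)
    (G : Measure ℝ) [IsProbabilityMeasure G] :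
    ∃ G' : Measure ℝ, IsProbabilityMeasure G' ∧
      G' ((Set.range x ∪ Set.range y)ᶜ) = 0 ∧
      μstar G' ≠ 0 ∧ μstar G' ≠ ⊤ ∧ L G ≤ L G' := by
  classical
  obtain rfl : μstar = biasedMean W := funext hμstar
  obtain rfl : L = biasedLikelihood W x y := funext hL
  set S : Finset ℝ := univ.image x ∪ univ.image y with hS
  have hS' : (S : Set ℝ) = Set.range x ∪ Set.range y := by simp [hS]
  have hxS i : x i ∈ S := mem_union_left _ (mem_image_of_mem x (mem_univ i))
  have hyS j : y j ∈ S := mem_union_right _ (mem_image_of_mem y (mem_univ j))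
  have hSpos : ∀ z ∈ S, 0 < z := by simp [hS, or_imp, forall_and, hx, hy]
  have hSne : S.Nonempty := by
    rcases Nat.eq_zero_or_pos m with rfl | hm
    exacts [⟨y ⟨0, by omega⟩, hyS _⟩, ⟨x ⟨0, hm⟩, hxS _⟩]
  suffices ∃ G' : Measure ℝ, IsProbabilityMeasure G' ∧ G' (↑S)ᶜ = 0 ∧
      biasedLikelihood W x y G ≤ biasedLikelihood W x y G' by
    obtain ⟨G', hG', hsupp, hLG'⟩ := this
    have hμ := biasedMean_ne_zero_and_ne_top hSpos (fun z hz => hWpos z (hSpos z hz)) hsupp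
    exact ⟨G', hG', hS' ▸ hsupp, hμ.1, hμ.2, hLG'⟩
  have ht : 0 < S.min' hSne := hSpos _ (S.min'_mem hSne)
  by_cases hc : G (Set.Ici (S.min' hSne)) = 0
  · refine ⟨Measure.dirac (S.min' hSne), inferInstance, ?_, ?_⟩
    · simp [Measure.dirac_apply', S.measurableSet.compl, S.min'_mem hSne]
    · rw [biasedLikelihood_eq_zero hmn (fun i => S.min'_le _ (hxS i))
        (fun j => S.min'_le _ (hyS j)) hc]
      exact zero_le
  · have := cond_isProbabilityMeasure (s := Set.Ici (S.min' hSne)) hc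
    refine ⟨_, Measure.isProbabilityMeasure_map monotone_roundDown.measurable.aemeasurable, ?_,
      biasedLikelihood_le_map_cond_roundDown hWmono G hSne ht hxS hyS hc⟩
    rw [Measure.map_apply monotone_roundDown.measurable S.measurableSet.compl]
    simp [Set.preimage, roundDown_mem]

/-- For every Borel probability measure `G` on `(0,∞)` with
`0 < μ*(G) < ∞`, there exists a Borel probability measure `G'` supported on the finite
set of observed points `{x_1, ..., x_m, y_1, ..., y_n}`, with `0 < μ*(G') < ∞`, such
that `L(G') ≥ L(G)`, where `μ*(H) = ∫_{(0,∞)} W dH` and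
`L(H) = ∏_i (H({x_i}) / μ*(H)) · ∏_j (H([y_j,∞)) / μ*(H))`. -/
theorem stmt13 (W : ℝ → ℝ) (hWpos : ∀ v : ℝ, 0 < v → 0 < W v)
    (hWmono : MonotoneOn W (Set.Ioi 0))
    (hWrc : ∀ v : ℝ, 0 < v → ContinuousWithinAt W (Set.Ici v) v)
    (m n : ℕ) (hmn : 1 ≤ m + n)
    (x : Fin m → ℝ) (hx : ∀ i, 0 < x i) (y : Fin n → ℝ) (hy : ∀ j, 0 < y j)
    (μstar : Measure ℝ → ENNReal)
    (hμstar : ∀ H : Measure ℝ, μstar H = ∫⁻ v in Set.Ioi (0 : ℝ), ENNReal.ofReal (W v) ∂H)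
    (L : Measure ℝ → ENNReal)
    (hL : ∀ H : Measure ℝ,
      L H = (∏ i, H {x i} / μstar H) * ∏ j, H (Set.Ici (y j)) / μstar H)
    (G : Measure ℝ) [IsProbabilityMeasure G] (hG : G (Set.Iic 0) = 0)
    (hμ0 : μstar G ≠ 0) (hμtop : μstar G ≠ ⊤) :
    ∃ G' : Measure ℝ, IsProbabilityMeasure G' ∧
      G' ((Set.range x ∪ Set.range y)ᶜ) = 0 ∧
      μstar G' ≠ 0 ∧ μstar G' ≠ ⊤ ∧ L G ≤ L G' :=
  stmt13_general W hWpos hWmono m n hmn x hx y hy μstar hμstar L hL G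
end
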